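/- arXiv:math/0612109 — 8 statements merged into one kernel-verified Lean document; each statement's English description precedes it below -/
import Mathlib

section
/- The plane ℝ² with the L¹ (Manhattan) metric is hyperconvex: for every index type ι, every family of centers c : ι → ℝ² and radii r : ι → ℝ such that ‖c i − c j‖₁ ≤ r i + r j for all i, j ∈ ι, there exists a point x ∈ ℝ² with ‖x − c i‖₁ ≤ r i for every i. -/
/-- The plane with the `L¹` (Manhattan) metric is hyperconvex: any family of closed balls
whose radii are pairwise compatible with the distances between their centers has a
common point. -/
theorem manhattan_plane_hyperconvex {ι : Type*} (c : ι → ℝ × ℝ) (r : ι → ℝ)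
    (h : ∀ i j, |(c i).1 - (c j).1| + |(c i).2 - (c j).2| ≤ r i + r j) :
    ∃ x : ℝ × ℝ, ∀ i, |x.1 - (c i).1| + |x.2 - (c i).2| ≤ r i := by
  rcases isEmpty_or_nonempty ι with h' | h'
  · exact ⟨(0, 0), fun i => (IsEmpty.false i).elim⟩
  · obtain ⟨i₀⟩ := h'
    set u : ι → ℝ := fun i => (c i).1 + (c i).2 with hu_def
    set v : ι → ℝ := fun i => (c i).1 - (c i).2 with hv_def
    have hu : ∀ i j, |u i - u j| ≤ r i + r j := by
      intro i j
      have h1 := h i j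
      have : |u i - u j| ≤ |(c i).1 - (c j).1| + |(c i).2 - (c j).2| := by
        have : u i - u j = ((c i).1 - (c j).1) + ((c i).2 - (c j).2) := by
          simp [hu_def]; ring
        rw [this]; exact abs_add_le _ _
      linarith
    have hv : ∀ i j, |v i - v j| ≤ r i + r j := by
      intro i j
      have h1 := h i j
      have : |v i - v j| ≤ |(c i).1 - (c j).1| + |(c i).2 - (c j).2| := by
        have : v i - v j = ((c i).1 - (c j).1) - ((c i).2 - (c j).2) := by
          simp [hv_def]; ring
        rw [this]; exact abs_sub _ _
      linarith
    set a := sSup (Set.range fun i => u i - r i) with ha_def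
    set b := sSup (Set.range fun i => v i - r i) with hb_def
    have hbddu : BddAbove (Set.range fun i => u i - r i) := by
      refine ⟨u i₀ + r i₀, ?_⟩
      rintro _ ⟨i, rfl⟩
      have := (abs_le.mp (hu i i₀)).2
      show u i - r i ≤ u i₀ + r i₀
      linarith
    have hbddv : BddAbove (Set.range fun i => v i - r i) := by
      refine ⟨v i₀ + r i₀, ?_⟩
      rintro _ ⟨i, rfl⟩
      have := (abs_le.mp (hv i i₀)).2
      show v i - r i ≤ v i₀ + r i₀
      linarith
    have ha : ∀ i, |a - u i| ≤ r i := by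
      intro i
      have h1 : u i - r i ≤ a := le_csSup hbddu ⟨i, rfl⟩
      have h2 : a ≤ u i + r i := by
        apply csSup_le ⟨_, Set.mem_range_self i₀⟩
        rintro _ ⟨j, rfl⟩
        have := (abs_le.mp (hu j i)).2
        show u j - r j ≤ u i + r i
        linarith
      rw [abs_le]; constructor <;> linarith
    have hb : ∀ i, |b - v i| ≤ r i := by
      intro i
      have h1 : v i - r i ≤ b := le_csSup hbddv ⟨i, rfl⟩
      have h2 : b ≤ v i + r i := by
        apply csSup_le ⟨_, Set.mem_range_self i₀⟩
        rintro _ ⟨j, rfl⟩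
        have := (abs_le.mp (hv j i)).2
        show v j - r j ≤ v i + r i
        linarith
      rw [abs_le]; constructor <;> linarith
    refine ⟨((a + b) / 2, (a - b) / 2), fun i => ?_⟩
    have h1 := abs_le.mp (ha i)
    have h2 := abs_le.mp (hb i)
    have e1 : u i = (c i).1 + (c i).2 := rfl
    have e2 : v i = (c i).1 - (c i).2 := rfl
    rcases abs_cases ((a + b) / 2 - (c i).1) with ⟨p1, p2⟩ | ⟨p1, p2⟩ <;>
      rcases abs_cases ((a - b) / 2 - (c i).2) with ⟨q1, q2⟩ | ⟨q1, q2⟩ <;>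
      simp only [p1, q1] <;> linarith
end

section
/- For every integer k ≥ 3 and all points p, q ∈ S_k, there exists a continuous path γ : [0,1] → ℝ^k with γ(0) = p, γ(1) = q, γ(t) ∈ S_k for all t, and ‖γ(s) − γ(t)‖₁ = |s − t| · ‖p − q‖₁ for all s, t ∈ [0,1]. In particular the order-k rectilinear cone S_k, with the metric induced from the L¹ norm of ℝ^k, is a geodesic space whose induced metric coincides with its intrinsic (shortest-path) metric; equivalently, the order-k rectilinear cone embeds isometrically into ℝ^k with the L¹ metric. -/
/-!
The coordinatewise minimum `c = p ⊓ q` lies in the quadrant of `p` as well as in that of `q`,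
and in `ℓ¹` it is metrically between them: `‖p - c‖₁ + ‖c - q‖₁ = ‖p - q‖₁`, coordinate by
coordinate. Quadrants are convex, so the broken line `p → c → q` stays in the cone. Parametrised
by arc length it is `1`-Lipschitz, and its endpoints are as far apart as its length; by the
triangle inequality this forces every sub-arc to be length-minimising, i.e. a geodesic.
-/

/-- The order-`k` rectilinear cone: the union, over `i : ZMod k`, of the quadrants
`Q i = {x : ZMod k → ℝ | ∀ m, 0 ≤ x m, and x m = 0 for m ∉ {i, i+1}}`,
a subset of `ℝ^k` carrying the `L¹` metric. -/
def rectCone (k : ℕ) [NeZero k] : Set (ZMod k → ℝ) :=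
  ⋃ i : ZMod k, {x | (∀ m, 0 ≤ x m) ∧ ∀ m, m ≠ i → m ≠ i + 1 → x m = 0}

open Set AffineMap WithLp

section Concat

variable {X : Type*}

noncomputable def concatAt (f g : ℝ → X) (a t : ℝ) : X := if t ≤ a then f t else g (t - a)

theorem concatAt_add {f g : ℝ → X} {a b : ℝ} (hb : 0 ≤ b) (hfg : f a = g 0) :
    concatAt f g a (a + b) = g b := by
  unfold concatAt
  split_ifs with h
  · obtain rfl : b = 0 := by linarith
    simpa using hfg
  · simp

theorem concatAt_mem_image {f g : ℝ → X} {a b t : ℝ} (ht : t ∈ Icc 0 (a + b)) :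
    concatAt f g a t ∈ f '' Icc 0 a ∪ g '' Icc 0 b := by
  unfold concatAt
  split_ifs with h
  · exact Or.inl ⟨t, ⟨ht.1, h⟩, rfl⟩
  · exact Or.inr ⟨t - a, ⟨by linarith, by linarith [ht.2]⟩, rfl⟩

variable [PseudoMetricSpace X]

theorem LipschitzWith.concatAt {f g : ℝ → X} {a : ℝ} (hf : LipschitzWith 1 f)
    (hg : LipschitzWith 1 g) (hfg : f a = g 0) : LipschitzWith 1 (concatAt f g a) := by
  refine LipschitzWith.mk_one fun s t => ?_
  wlog hst : s ≤ t generalizing s t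
  · rw [dist_comm, dist_comm s]
    exact this t s (le_of_not_ge hst)
  have hf' := hf.dist_le_mul
  have hg' := hg.dist_le_mul
  simp only [NNReal.coe_one, one_mul] at hf' hg'
  unfold _root_.concatAt
  split_ifs with hs ht ht
  · exact hf' s t
  · calc dist (f s) (g (t - a)) ≤ dist (f s) (f a) + dist (g 0) (g (t - a)) := by
          rw [← hfg]; exact dist_triangle _ _ _
      _ ≤ dist s a + dist 0 (t - a) := add_le_add (hf' s a) (hg' 0 (t - a))
      _ = dist s t := by
          simp only [Real.dist_eq]
          rw [abs_of_nonpos (by linarith), abs_of_nonpos (by linarith), abs_of_nonpos (by linarith)]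
          ring
  · linarith
  · simpa only [dist_sub_right] using hg' (s - a) (t - a)

theorem LipschitzWith.dist_eq_of_dist_endpoints_eq {h : ℝ → X} (hh : LipschitzWith 1 h) {L : ℝ}
    (hL : dist (h 0) (h L) = L) {s t : ℝ} (hs : s ∈ Icc 0 L) (ht : t ∈ Icc 0 L) :
    dist (h s) (h t) = dist s t := by
  wlog hst : s ≤ t generalizing s t
  · rw [dist_comm, dist_comm s]
    exact this ht hs (le_of_not_ge hst)
  have hle := hh.dist_le_mul
  simp only [NNReal.coe_one, one_mul] at hle
  refine le_antisymm (hle s t) ?_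
  have := calc L = dist (h 0) (h L) := hL.symm
    _ ≤ dist (h 0) (h s) + dist (h s) (h t) + dist (h t) (h L) := dist_triangle4 _ _ _ _
    _ ≤ dist 0 s + dist (h s) (h t) + dist t L := by gcongr <;> apply hle
  simp only [Real.dist_eq] at this ⊢
  rw [abs_of_nonpos (by linarith [hs.1]), abs_of_nonpos (by linarith [ht.2])] at this
  rw [abs_of_nonpos (by linarith)]
  linarith

end Concat

section Normed

variable {E : Type*} [NormedAddCommGroup E] [NormedSpace ℝ E]

noncomputable def unitSpeedSegment (x y : E) (t : ℝ) : E := lineMap x y (t / dist x y)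

theorem lipschitzWith_unitSpeedSegment (x y : E) : LipschitzWith 1 (unitSpeedSegment x y) := by
  refine LipschitzWith.mk_one fun s t => ?_
  rw [unitSpeedSegment, unitSpeedSegment, dist_lineMap_lineMap, Real.dist_eq, Real.dist_eq,
    ← sub_div, abs_div, abs_dist]
  rcases eq_or_ne (dist x y) 0 with hxy | hxy
  · simp [hxy]
  · rw [div_mul_cancel₀ _ hxy]

@[simp]
theorem unitSpeedSegment_zero (x y : E) : unitSpeedSegment x y 0 = x := by
  simp [unitSpeedSegment]

@[simp]
theorem unitSpeedSegment_dist (x y : E) : unitSpeedSegment x y (dist x y) = y := by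
  rcases eq_or_ne (dist x y) 0 with hxy | hxy
  · rw [dist_eq_zero.1 hxy, unitSpeedSegment, lineMap_same_apply]
  · rw [unitSpeedSegment, div_self hxy, lineMap_apply_one]

theorem unitSpeedSegment_image_subset (x y : E) :
    unitSpeedSegment x y '' Icc 0 (dist x y) ⊆ segment ℝ x y := by
  rintro _ ⟨t, ⟨ht0, ht⟩, rfl⟩
  rw [segment_eq_image_lineMap]
  exact ⟨t / dist x y, ⟨div_nonneg ht0 dist_nonneg, div_le_one_of_le₀ ht dist_nonneg⟩, rfl⟩

theorem exists_path_of_dist_add_dist_eq {x y z : E} (hxyz : dist x y + dist y z = dist x z) :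
    ∃ γ : ℝ → E, Continuous γ ∧ γ 0 = x ∧ γ 1 = z ∧
      (∀ t ∈ Icc (0 : ℝ) 1, γ t ∈ segment ℝ x y ∪ segment ℝ y z) ∧
      ∀ s ∈ Icc (0 : ℝ) 1, ∀ t ∈ Icc (0 : ℝ) 1, dist (γ s) (γ t) = |s - t| * dist x z := by
  set η := concatAt (unitSpeedSegment x y) (unitSpeedSegment y z) (dist x y)
  have hjoin : unitSpeedSegment x y (dist x y) = unitSpeedSegment y z 0 := by simp
  have hη : LipschitzWith 1 η :=
    (lipschitzWith_unitSpeedSegment x y).concatAt (lipschitzWith_unitSpeedSegment y z) hjoin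
  have hη0 : η 0 = x := by simp [η, concatAt, dist_nonneg]
  have hηend : η (dist x z) = z := by
    rw [← hxyz]
    exact (concatAt_add dist_nonneg hjoin).trans (unitSpeedSegment_dist y z)
  have hscale : ∀ t ∈ Icc (0 : ℝ) 1, t * dist x z ∈ Icc 0 (dist x z) := fun t ht =>
    ⟨mul_nonneg ht.1 dist_nonneg, mul_le_of_le_one_left dist_nonneg ht.2⟩
  refine ⟨fun t => η (t * dist x z), hη.continuous.comp (by fun_prop), by simp [hη0],
    by simp [hηend], fun t ht => ?_, fun s hs t ht => ?_⟩
  · have hmem := concatAt_mem_image (f := unitSpeedSegment x y) (g := unitSpeedSegment y z)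
      (t := t * dist x z) (by rw [hxyz]; exact hscale t ht)
    exact hmem.imp (fun h => unitSpeedSegment_image_subset x y h)
      (fun h => unitSpeedSegment_image_subset y z h)
  · rw [hη.dist_eq_of_dist_endpoints_eq (by rw [hη0, hηend]) (hscale s hs) (hscale t ht),
      Real.dist_eq, ← sub_mul, abs_mul, abs_dist]

end Normed

section L1

variable {ι : Type*} [Fintype ι]

theorem abs_sub_min_add_abs_min_sub (a b : ℝ) : |a - min a b| + |min a b - b| = |a - b| := by
  rcases le_total a b with h | h
  · simp [min_eq_left h]
  · simp [min_eq_right h]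

theorem PiLp.dist_one_eq_sum_abs (x y : PiLp 1 fun _ : ι => ℝ) :
    dist x y = ∑ i, |ofLp x i - ofLp y i| := by
  simp [PiLp.dist_eq_of_L1, Real.dist_eq]

theorem PiLp.dist_toLp_one_inf_add (x y : ι → ℝ) :
    dist (toLp 1 x) (toLp 1 (x ⊓ y)) + dist (toLp 1 (x ⊓ y)) (toLp 1 y) =
      dist (toLp 1 x) (toLp 1 y) := by
  simp only [PiLp.dist_one_eq_sum_abs, ← Finset.sum_add_distrib, Pi.inf_apply]
  exact Finset.sum_congr rfl fun i _ => abs_sub_min_add_abs_min_sub (x i) (y i)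

end L1

theorem WithLp.ofLp_mem_segment {p : ENNReal} {V : Type*} [AddCommGroup V] [Module ℝ V] {x y : V}
    {z : WithLp p V} (hz : z ∈ segment ℝ (toLp p x) (toLp p y)) : ofLp z ∈ segment ℝ x y := by
  obtain ⟨a, b, ha, hb, hab, rfl⟩ := hz
  exact ⟨a, b, ha, hb, hab, by simp⟩

section Quadrant

variable {k : ℕ}

def rectQuadrant (i : ZMod k) : Set (ZMod k → ℝ) :=
  {x | (∀ m, 0 ≤ x m) ∧ ∀ m, m ≠ i → m ≠ i + 1 → x m = 0}

theorem rectCone_eq_iUnion_rectQuadrant [NeZero k] : rectCone k = ⋃ i, rectQuadrant i := rfl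

theorem convex_rectQuadrant (i : ZMod k) : Convex ℝ (rectQuadrant i) := by
  rintro x ⟨hx0, hx⟩ y ⟨hy0, hy⟩ a b ha hb -
  refine ⟨fun m => ?_, fun m hi hi' => ?_⟩
  · simp only [Pi.add_apply, Pi.smul_apply, smul_eq_mul]
    exact add_nonneg (mul_nonneg ha (hx0 m)) (mul_nonneg hb (hy0 m))
  · simp [hx m hi hi', hy m hi hi']

theorem mem_rectQuadrant_of_le {i : ZMod k} {x y : ZMod k → ℝ} (hx : x ∈ rectQuadrant i)
    (hy : 0 ≤ y) (hyx : y ≤ x) : y ∈ rectQuadrant i :=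
  ⟨hy, fun m hi hi' => le_antisymm (hx.2 m hi hi' ▸ hyx m) (hy m)⟩

end Quadrant

theorem rectCone_geodesic_general (k : ℕ) [NeZero k]
    (p q : ZMod k → ℝ) (hp : p ∈ rectCone k) (hq : q ∈ rectCone k) :
    ∃ γ : ℝ → ZMod k → ℝ,
      ContinuousOn γ (Set.Icc 0 1) ∧
      γ 0 = p ∧ γ 1 = q ∧
      (∀ t ∈ Set.Icc (0 : ℝ) 1, γ t ∈ rectCone k) ∧
      (∀ s ∈ Set.Icc (0 : ℝ) 1, ∀ t ∈ Set.Icc (0 : ℝ) 1,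
        (∑ m, |γ s m - γ t m|) = |s - t| * ∑ m, |p m - q m|) := by
  rw [rectCone_eq_iUnion_rectQuadrant, mem_iUnion] at hp hq
  obtain ⟨i, hpi⟩ := hp
  obtain ⟨j, hqj⟩ := hq
  have hinf : 0 ≤ p ⊓ q := le_inf hpi.1 hqj.1
  obtain ⟨γ, hcont, hγ0, hγ1, hγseg, hγdist⟩ :=
    exists_path_of_dist_add_dist_eq (PiLp.dist_toLp_one_inf_add p q)
  refine ⟨fun t => ofLp (γ t), ((PiLp.continuous_ofLp 1 _).comp hcont).continuousOn,
    by simp [hγ0], by simp [hγ1], fun t ht => ?_, fun s hs t ht => ?_⟩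
  · rw [rectCone_eq_iUnion_rectQuadrant, mem_iUnion]
    rcases hγseg t ht with h | h
    · exact ⟨i, (convex_rectQuadrant i).segment_subset hpi
        (mem_rectQuadrant_of_le hpi hinf inf_le_left) (ofLp_mem_segment h)⟩
    · exact ⟨j, (convex_rectQuadrant j).segment_subset
        (mem_rectQuadrant_of_le hqj hinf inf_le_right) hqj (ofLp_mem_segment h)⟩
  · simpa only [PiLp.dist_one_eq_sum_abs, ofLp_toLp] using hγdist s hs t ht

/-- For every `k ≥ 3`, any two points `p, q` of the order-`k` rectilinear cone are joined
by a continuous path inside the cone along which the `L¹` distance behaves affinely: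
`‖γ s − γ t‖₁ = |s − t| · ‖p − q‖₁`.  Hence the cone, with the metric induced from the
`L¹` norm of `ℝ^k`, is a geodesic space whose induced and intrinsic metrics coincide. -/
theorem rectCone_geodesic (k : ℕ) [NeZero k] (hk : 3 ≤ k)
    (p q : ZMod k → ℝ) (hp : p ∈ rectCone k) (hq : q ∈ rectCone k) :
    ∃ γ : ℝ → ZMod k → ℝ,
      ContinuousOn γ (Set.Icc 0 1) ∧
      γ 0 = p ∧ γ 1 = q ∧
      (∀ t ∈ Set.Icc (0 : ℝ) 1, γ t ∈ rectCone k) ∧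
      (∀ s ∈ Set.Icc (0 : ℝ) 1, ∀ t ∈ Set.Icc (0 : ℝ) 1,
        (∑ m, |γ s m - γ t m|) = |s - t| * ∑ m, |p m - q m|) :=
  rectCone_geodesic_general k p q hp hq
end

section
/- For every integer k ≥ 4, the order-k rectilinear cone S_k with the metric induced from the L¹ norm of ℝ^k is hyperconvex: for every index type ι, every family of centers c : ι → S_k and radii r : ι → ℝ such that ‖c i − c j‖₁ ≤ r i + r j for all i, j ∈ ι, there exists a point x ∈ S_k with ‖x − c i‖₁ ≤ r i for every i. -/
open Finset

namespace RectConeAux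

lemma maxabs (x y : ℝ) : |x| + |y| ≤ max |x + y| |x - y| := by
  rcases le_total 0 x with hx | hx <;> rcases le_total 0 y with hy | hy
  · exact le_max_of_le_left (by rw [abs_of_nonneg hx, abs_of_nonneg hy]; exact le_abs_self _)
  · refine le_max_of_le_right ?_
    rw [abs_of_nonneg hx, abs_of_nonpos hy]
    have := le_abs_self (x - y); linarith
  · refine le_max_of_le_right ?_
    rw [abs_of_nonpos hx, abs_of_nonneg hy]
    have := neg_abs_le (x - y); linarith
  · refine le_max_of_le_left ?_
    rw [abs_of_nonpos hx, abs_of_nonpos hy]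
    have := neg_abs_le (x + y); linarith

lemma maxid (a : ℝ) : max a 0 - max (-a) 0 = a := by
  rcases le_total 0 a with h | h
  · rw [max_eq_left h, max_eq_right (neg_nonpos.mpr h), sub_zero]
  · rw [max_eq_right h, max_eq_left (neg_nonneg.mpr h), zero_sub, neg_neg]

lemma pairL (a b a' b' : ℝ) (ha : 0 ≤ a) (hb : 0 ≤ b) (ha' : 0 ≤ a') (hb' : 0 ≤ b')
    (h : a = 0 ∨ b = 0) (h' : a' = 0 ∨ b' = 0) :
    |a - a'| + |b - b'| = |(a - b) - (a' - b')| := by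
  rcases h with rfl | rfl <;> rcases h' with rfl | rfl
  · rw [show (0 - b : ℝ) - (0 - b') = -(b - b') from by ring, abs_neg]; simp
  · rw [show (0 - b : ℝ) - (a' - 0) = -(b + a') from by ring, abs_neg, zero_sub, abs_neg,
      sub_zero, abs_of_nonneg ha', abs_of_nonneg hb, abs_of_nonneg (add_nonneg hb ha')]
    ring
  · rw [show (a - 0 : ℝ) - (0 - b') = a + b' from by ring, sub_zero, zero_sub, abs_neg,
      abs_of_nonneg ha, abs_of_nonneg hb', abs_of_nonneg (add_nonneg ha hb')]
  · simp

lemma plane_helly {ι : Type*} (U V R : ι → ℝ) (i0 : ι)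
    (hC : ∀ i j, |U i - U j| + |V i - V j| ≤ R i + R j) :
    ∃ yU yV : ℝ, (∀ i, |yU - U i| + |yV - V i| ≤ R i) ∧ U i0 + V i0 - R i0 ≤ yU + yV := by
  have hp : ∀ i j, |(U i + V i) - (U j + V j)| ≤ R i + R j := by
    intro i j
    calc |(U i + V i) - (U j + V j)| = |(U i - U j) + (V i - V j)| := by ring_nf
      _ ≤ |U i - U j| + |V i - V j| := abs_add_le _ _
      _ ≤ R i + R j := hC i j
  have hq : ∀ i j, |(U i - V i) - (U j - V j)| ≤ R i + R j := by
    intro i j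
    calc |(U i - V i) - (U j - V j)| = |(U i - U j) - (V i - V j)| := by ring_nf
      _ ≤ |U i - U j| + |V i - V j| := abs_sub _ _
      _ ≤ R i + R j := hC i j
  set p : ι → ℝ := fun i => U i + V i with hpdef
  set q : ι → ℝ := fun i => U i - V i with hqdef
  have hbp : BddAbove (Set.range fun i => p i - R i) := by
    refine ⟨p i0 + R i0, ?_⟩
    rintro _ ⟨j, rfl⟩
    have := abs_le.mp (hp j i0)
    simp only [hpdef]
    linarith [this.2]
  have hbq : BddAbove (Set.range fun i => q i - R i) := by
    refine ⟨q i0 + R i0, ?_⟩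
    rintro _ ⟨j, rfl⟩
    have := abs_le.mp (hq j i0)
    simp only [hqdef]
    linarith [this.2]
  set ps := sSup (Set.range fun i => p i - R i) with hps
  set qs := sSup (Set.range fun i => q i - R i) with hqs
  have hps_ge : ∀ i, p i - R i ≤ ps := fun i => le_csSup hbp ⟨i, rfl⟩
  have hps_le : ∀ i, ps ≤ p i + R i := by
    intro i
    refine csSup_le ⟨p i0 - R i0, ⟨i0, rfl⟩⟩ ?_
    rintro _ ⟨j, rfl⟩
    have := abs_le.mp (hp j i)
    simp only [hpdef]
    linarith [this.2]
  have hqs_ge : ∀ i, q i - R i ≤ qs := fun i => le_csSup hbq ⟨i, rfl⟩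
  have hqs_le : ∀ i, qs ≤ q i + R i := by
    intro i
    refine csSup_le ⟨q i0 - R i0, ⟨i0, rfl⟩⟩ ?_
    rintro _ ⟨j, rfl⟩
    have := abs_le.mp (hq j i)
    simp only [hqdef]
    linarith [this.2]
  refine ⟨(ps + qs) / 2, (ps - qs) / 2, ?_, ?_⟩
  · intro i
    have h1 : |((ps + qs) / 2 - U i) + ((ps - qs) / 2 - V i)| = |ps - p i| := by
      rw [hpdef]; ring_nf
    have h2 : |((ps + qs) / 2 - U i) - ((ps - qs) / 2 - V i)| = |qs - q i| := by
      rw [hqdef]; ring_nf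
    have hm := maxabs ((ps + qs) / 2 - U i) ((ps - qs) / 2 - V i)
    rw [h1, h2] at hm
    have hbp' : |ps - p i| ≤ R i := abs_le.mpr ⟨by linarith [hps_ge i], by linarith [hps_le i]⟩
    have hbq' : |qs - q i| ≤ R i := abs_le.mpr ⟨by linarith [hqs_ge i], by linarith [hqs_le i]⟩
    calc |((ps + qs) / 2 - U i)| + |((ps - qs) / 2 - V i)| ≤ max |ps - p i| |qs - q i| := hm
      _ ≤ R i := max_le hbp' hbq'
  · have := hps_ge i0
    have : (ps + qs) / 2 + (ps - qs) / 2 = ps := by ring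
    rw [this]
    have := hps_ge i0
    simpa [hpdef] using this

variable {α : Type*} [Fintype α]

lemma sum_abs_tri (x w z : α → ℝ) :
    ∑ a, |x a - z a| ≤ (∑ a, |x a - w a|) + ∑ a, |w a - z a| := by
  rw [← Finset.sum_add_distrib]
  exact Finset.sum_le_sum fun a _ => abs_sub_le _ _ _

lemma sum_abs_split (a b cc z : α → ℝ) (hz : ∀ m, 0 ≤ z m) (hc : ∀ m, cc m = b m + z m)
    (hs : ∀ m, z m ≠ 0 → a m = 0 ∧ b m = 0) :
    ∑ m, |a m - cc m| = (∑ m, |a m - b m|) + ∑ m, z m := by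
  rw [← Finset.sum_add_distrib]
  refine Finset.sum_congr rfl fun m _ => ?_
  by_cases hzm : z m = 0
  · rw [hc m, hzm, add_zero, add_zero]
  · obtain ⟨h1, h2⟩ := hs m hzm
    rw [hc m, h1, h2]
    simp [abs_of_nonneg (hz m)]

lemma sum_abs_disj (a b : α → ℝ) (ha : ∀ m, 0 ≤ a m) (hb : ∀ m, 0 ≤ b m)
    (hd : ∀ m, a m = 0 ∨ b m = 0) :
    ∑ m, |a m - b m| = (∑ m, a m) + ∑ m, b m := by
  rw [← Finset.sum_add_distrib]
  refine Finset.sum_congr rfl fun m _ => ?_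
  rcases hd m with h' | h'
  · rw [h', zero_sub, abs_neg, abs_of_nonneg (hb m), zero_add]
  · rw [h', sub_zero, abs_of_nonneg (ha m), add_zero]

lemma zmod_nat_ne_zero (k n : ℕ) (h0 : 0 < n) (hkn : n < k) : ((n : ℕ) : ZMod k) ≠ 0 := by
  intro hEq
  have := (ZMod.natCast_eq_zero_iff n k).mp hEq
  exact absurd (Nat.le_of_dvd h0 this) (by omega)

end RectConeAux

lemma rectCone_case4 {ι : Type*} (c : ι → ZMod 4 → ℝ) (r : ι → ℝ) (q : ι → ZMod 4)
    (hpos : ∀ i m, 0 ≤ c i m) (hsupp : ∀ i m, m ≠ q i → m ≠ q i + 1 → c i m = 0)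
    (h : ∀ i j, (∑ m, |c i m - c j m|) ≤ r i + r j) (i0 : ι) :
    ∃ x ∈ rectCone 4, ∀ i, (∑ m, |x m - c i m|) ≤ r i := by
  classical
  have hall : ∀ m : ZMod 4, m = 0 ∨ m = 1 ∨ m = 2 ∨ m = 3 := by decide
  have horth : ∀ i, (c i 0 = 0 ∨ c i 2 = 0) ∧ (c i 1 = 0 ∨ c i 3 = 0) := by
    intro i
    constructor
    · by_cases h0 : c i 0 = 0
      · exact Or.inl h0
      · right
        have h0q : (0 : ZMod 4) = q i ∨ (0 : ZMod 4) = q i + 1 := by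
          by_contra hcon
          push_neg at hcon
          exact h0 (hsupp i 0 hcon.1 hcon.2)
        refine hsupp i 2 (fun hEq => ?_) (fun hEq => ?_)
        · rcases h0q with h' | h'
          · rw [← hEq] at h'; exact absurd h' (by decide)
          · rw [← hEq] at h'; exact absurd h' (by decide)
        · rcases h0q with h' | h'
          · rw [← h'] at hEq; exact absurd hEq (by decide)
          · rw [← hEq] at h'; exact absurd h' (by decide)
    · by_cases h1 : c i 1 = 0
      · exact Or.inl h1
      · right
        have h1q : (1 : ZMod 4) = q i ∨ (1 : ZMod 4) = q i + 1 := by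
          by_contra hcon
          push_neg at hcon
          exact h1 (hsupp i 1 hcon.1 hcon.2)
        refine hsupp i 3 (fun hEq => ?_) (fun hEq => ?_)
        · rcases h1q with h' | h'
          · rw [← hEq] at h'; exact absurd h' (by decide)
          · rw [← hEq] at h'; exact absurd h' (by decide)
        · rcases h1q with h' | h'
          · rw [← h'] at hEq; exact absurd hEq (by decide)
          · rw [← hEq] at h'; exact absurd h' (by decide)
  have iso4 : ∀ x z : ZMod 4 → ℝ, (∀ m, 0 ≤ x m) → (∀ m, 0 ≤ z m) →
      (x 0 = 0 ∨ x 2 = 0) → (x 1 = 0 ∨ x 3 = 0) →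
      (z 0 = 0 ∨ z 2 = 0) → (z 1 = 0 ∨ z 3 = 0) →
      (∑ m, |x m - z m|) = |(x 0 - x 2) - (z 0 - z 2)| + |(x 1 - x 3) - (z 1 - z 3)| := by
    intro x z hx hz hx02 hx13 hz02 hz13
    have huniv : (Finset.univ : Finset (ZMod 4)) = {0, 1, 2, 3} := by decide
    rw [huniv, Finset.sum_insert (by decide), Finset.sum_insert (by decide),
      Finset.sum_insert (by decide), Finset.sum_singleton]
    have e1 := RectConeAux.pairL (x 0) (x 2) (z 0) (z 2) (hx 0) (hx 2) (hz 0) (hz 2) hx02 hz02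
    have e2 := RectConeAux.pairL (x 1) (x 3) (z 1) (z 3) (hx 1) (hx 3) (hz 1) (hz 3) hx13 hz13
    linarith
  obtain ⟨yU, yV, hy, -⟩ := RectConeAux.plane_helly (fun i => c i 0 - c i 2)
    (fun i => c i 1 - c i 3) r i0
    (fun i j => by
      rw [← iso4 (c i) (c j) (hpos i) (hpos j) (horth i).1 (horth i).2 (horth j).1 (horth j).2]
      exact h i j)
  set x : ZMod 4 → ℝ := fun m => if m = 0 then max yU 0 else if m = 1 then max yV 0
    else if m = 2 then max (-yU) 0 else max (-yV) 0 with hxdef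
  have d10 : (1 : ZMod 4) ≠ 0 := by decide
  have d20 : (2 : ZMod 4) ≠ 0 := by decide
  have d21 : (2 : ZMod 4) ≠ 1 := by decide
  have d30 : (3 : ZMod 4) ≠ 0 := by decide
  have d31 : (3 : ZMod 4) ≠ 1 := by decide
  have d32 : (3 : ZMod 4) ≠ 2 := by decide
  have hx0 : x 0 = max yU 0 := by simp [hxdef]
  have hx1 : x 1 = max yV 0 := by simp [hxdef, d10]
  have hx2 : x 2 = max (-yU) 0 := by simp [hxdef, d20, d21]
  have hx3 : x 3 = max (-yV) 0 := by simp [hxdef, d30, d31, d32]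
  have hxnn : ∀ m, 0 ≤ x m := by
    intro m; simp only [hxdef]; split_ifs <;> exact le_max_right _ _
  have hxor1 : x 0 = 0 ∨ x 2 = 0 := by
    rcases le_total yU 0 with h' | h'
    · exact Or.inl (by rw [hx0]; exact max_eq_right h')
    · exact Or.inr (by rw [hx2]; exact max_eq_right (neg_nonpos.mpr h'))
  have hxor2 : x 1 = 0 ∨ x 3 = 0 := by
    rcases le_total yV 0 with h' | h'
    · exact Or.inl (by rw [hx1]; exact max_eq_right h')
    · exact Or.inr (by rw [hx3]; exact max_eq_right (neg_nonpos.mpr h'))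
  have hu : x 0 - x 2 = yU := by rw [hx0, hx2, RectConeAux.maxid]
  have hv : x 1 - x 3 = yV := by rw [hx1, hx3, RectConeAux.maxid]
  have hmem : x ∈ rectCone 4 := by
    simp only [rectCone, Set.mem_iUnion, Set.mem_setOf_eq]
    rcases le_or_gt 0 yU with hU | hU <;> rcases le_or_gt 0 yV with hV | hV
    · refine ⟨0, hxnn, fun m h1 h2 => ?_⟩
      rcases hall m with rfl | rfl | rfl | rfl
      · exact absurd rfl h1
      · exact absurd (by decide : (1 : ZMod 4) = 0 + 1) h2
      · rw [hx2]; exact max_eq_right (neg_nonpos.mpr hU)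
      · rw [hx3]; exact max_eq_right (neg_nonpos.mpr hV)
    · refine ⟨3, hxnn, fun m h1 h2 => ?_⟩
      rcases hall m with rfl | rfl | rfl | rfl
      · exact absurd (by decide : (0 : ZMod 4) = 3 + 1) h2
      · rw [hx1]; exact max_eq_right hV.le
      · rw [hx2]; exact max_eq_right (neg_nonpos.mpr hU)
      · exact absurd rfl h1
    · refine ⟨1, hxnn, fun m h1 h2 => ?_⟩
      rcases hall m with rfl | rfl | rfl | rfl
      · rw [hx0]; exact max_eq_right hU.le
      · exact absurd rfl h1
      · exact absurd (by decide : (2 : ZMod 4) = 1 + 1) h2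
      · rw [hx3]; exact max_eq_right (neg_nonpos.mpr hV)
    · refine ⟨2, hxnn, fun m h1 h2 => ?_⟩
      rcases hall m with rfl | rfl | rfl | rfl
      · rw [hx0]; exact max_eq_right hU.le
      · rw [hx1]; exact max_eq_right hV.le
      · exact absurd rfl h1
      · exact absurd (by decide : (3 : ZMod 4) = 2 + 1) h2
  refine ⟨x, hmem, fun i => ?_⟩
  have := iso4 x (c i) hxnn (hpos i) hxor1 hxor2 (horth i).1 (horth i).2
  rw [this, hu, hv]
  exact hy i

lemma rectCone_case5 (k : ℕ) [NeZero k] (hk : 5 ≤ k) {ι : Type*} (c : ι → ZMod k → ℝ)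
    (r : ι → ℝ) (q : ι → ZMod k)
    (hpos : ∀ i m, 0 ≤ c i m) (hsupp : ∀ i m, m ≠ q i → m ≠ q i + 1 → c i m = 0)
    (h : ∀ i j, (∑ m, |c i m - c j m|) ≤ r i + r j) (i0 : ι)
    (hi0 : r i0 < ∑ m, c i0 m) :
    ∃ x ∈ rectCone k, ∀ i, (∑ m, |x m - c i m|) ≤ r i := by
  classical
  set q0 := q i0 with hq0
  have hz : ∀ n : ℕ, 0 < n → n < k → ((n : ℕ) : ZMod k) ≠ 0 :=
    fun n h0 hkn => RectConeAux.zmod_nat_ne_zero k n h0 hkn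
  have e01 : q0 ≠ q0 + 1 := fun hEq => hz 1 (by omega) (by omega) (by push_cast; linear_combination -hEq)
  have e02 : q0 ≠ q0 + 2 := fun hEq => hz 2 (by omega) (by omega) (by push_cast; linear_combination -hEq)
  have e03 : q0 ≠ q0 + 3 := fun hEq => hz 3 (by omega) (by omega) (by push_cast; linear_combination -hEq)
  have e0m1 : q0 ≠ q0 - 1 := fun hEq => hz 1 (by omega) (by omega) (by push_cast; linear_combination hEq)
  have e12 : q0 + 1 ≠ q0 + 2 := fun hEq => hz 1 (by omega) (by omega) (by push_cast; linear_combination -hEq)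
  have e13 : q0 + 1 ≠ q0 + 3 := fun hEq => hz 2 (by omega) (by omega) (by push_cast; linear_combination -hEq)
  have e1m1 : q0 + 1 ≠ q0 - 1 := fun hEq => hz 2 (by omega) (by omega) (by push_cast; linear_combination hEq)
  have e23 : q0 + 2 ≠ q0 + 3 := fun hEq => hz 1 (by omega) (by omega) (by push_cast; linear_combination -hEq)
  have e2m1 : q0 + 2 ≠ q0 - 1 := fun hEq => hz 3 (by omega) (by omega) (by push_cast; linear_combination hEq)
  have e3m1 : q0 + 3 ≠ q0 - 1 := fun hEq => hz 4 (by omega) (by omega) (by push_cast; linear_combination hEq)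
  have em2m1 : q0 - 2 ≠ q0 - 1 := fun hEq => hz 1 (by omega) (by omega) (by push_cast; linear_combination -hEq)
  have em20 : q0 - 2 ≠ q0 := fun hEq => hz 2 (by omega) (by omega) (by push_cast; linear_combination -hEq)
  have em21 : q0 - 2 ≠ q0 + 1 := fun hEq => hz 3 (by omega) (by omega) (by push_cast; linear_combination -hEq)
  have em22 : q0 - 2 ≠ q0 + 2 := fun hEq => hz 4 (by omega) (by omega) (by push_cast; linear_combination -hEq)
  set Near : ι → Prop := fun i => q i = q0 ∨ q i = q0 + 1 ∨ q i = q0 - 1 with hNear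
  set w : ι → ZMod k → ℝ := fun i =>
    if Near i then c i
    else if q i = q0 + 2 then (fun m => if m = q0 + 2 then c i (q0 + 2) else 0)
    else if q i = q0 - 2 then (fun m => if m = q0 - 1 then c i (q0 - 1) else 0)
    else 0 with hwdef
  set ρ : ι → ℝ := fun i => ∑ m, (c i m - w i m) with hρdef
  have hwnearm : ∀ i, Near i → ∀ m, w i m = c i m :=
    fun i hi m => by simp only [hwdef, if_pos hi]
  have hwm2 : ∀ i, ¬Near i → q i = q0 + 2 → ∀ m,
      w i m = if m = q0 + 2 then c i (q0 + 2) else 0 :=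
    fun i h1 h2 m => by simp only [hwdef, if_neg h1, if_pos h2]
  have hwm2' : ∀ i, ¬Near i → q i ≠ q0 + 2 → q i = q0 - 2 → ∀ m,
      w i m = if m = q0 - 1 then c i (q0 - 1) else 0 :=
    fun i h1 h2 h3 m => by simp only [hwdef, if_neg h1, if_neg h2, if_pos h3]
  have hwmfar : ∀ i, ¬Near i → q i ≠ q0 + 2 → q i ≠ q0 - 2 → ∀ m, w i m = 0 :=
    fun i h1 h2 h3 m => by simp only [hwdef, if_neg h1, if_neg h2, if_neg h3, Pi.zero_apply]
  have hF : ∀ i, (∀ m, 0 ≤ w i m) ∧ (∀ m, w i m ≤ c i m) ∧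
      (∀ m, c i m ≠ w i m → (m ≠ q0 - 1 ∧ m ≠ q0 ∧ m ≠ q0 + 1 ∧ m ≠ q0 + 2)) ∧
      (∀ m, m ≠ q0 - 1 → m ≠ q0 → m ≠ q0 + 1 → m ≠ q0 + 2 → w i m = 0) ∧
      (w i q0 = 0 ∨ w i (q0 + 2) = 0) ∧ (w i (q0 + 1) = 0 ∨ w i (q0 - 1) = 0) := by
    intro i
    by_cases hni : Near i
    · refine ⟨fun m => by rw [hwnearm i hni m]; exact hpos i m,
        fun m => by rw [hwnearm i hni m],
        fun m hm => absurd (hwnearm i hni m).symm hm, ?_, ?_, ?_⟩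
      · intro m h1 h2 h3 h4
        rw [hwnearm i hni m]
        refine hsupp i m ?_ ?_
        · rcases hni with e | e | e
          · rw [e]; exact h2
          · rw [e]; exact h3
          · rw [e]; exact h1
        · rcases hni with e | e | e
          · rw [e]; exact h3
          · rw [e, show q0 + 1 + 1 = q0 + 2 from by ring]; exact h4
          · rw [e, show q0 - 1 + 1 = q0 from by ring]; exact h2
      · rw [hwnearm i hni q0, hwnearm i hni (q0 + 2)]
        rcases hni with e | e | e
        · exact Or.inr (hsupp i (q0 + 2) (by rw [e]; exact e02.symm)
            (by rw [e]; exact e12.symm))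
        · exact Or.inl (hsupp i q0 (by rw [e]; exact e01)
            (by rw [e, show q0 + 1 + 1 = q0 + 2 from by ring]; exact e02))
        · exact Or.inr (hsupp i (q0 + 2) (by rw [e]; exact e2m1)
            (by rw [e, show q0 - 1 + 1 = q0 from by ring]; exact e02.symm))
      · rw [hwnearm i hni (q0 + 1), hwnearm i hni (q0 - 1)]
        rcases hni with e | e | e
        · exact Or.inr (hsupp i (q0 - 1) (by rw [e]; exact e0m1.symm)
            (by rw [e]; exact e1m1.symm))
        · exact Or.inr (hsupp i (q0 - 1) (by rw [e]; exact e1m1.symm)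
            (by rw [e, show q0 + 1 + 1 = q0 + 2 from by ring]; exact e2m1.symm))
        · exact Or.inl (hsupp i (q0 + 1) (by rw [e]; exact e1m1)
            (by rw [e, show q0 - 1 + 1 = q0 from by ring]; exact e01.symm))
    · by_cases h2 : q i = q0 + 2
      · refine ⟨?_, ?_, ?_, ?_, ?_, ?_⟩
        · intro m; rw [hwm2 i hni h2 m]; split_ifs
          · exact hpos i _
          · exact le_refl 0
        · intro m; rw [hwm2 i hni h2 m]; split_ifs with hm
          · subst hm; exact le_refl _
          · exact hpos i m
        · intro m hm
          rw [hwm2 i hni h2 m] at hm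
          by_cases hmq : m = q0 + 2
          · rw [if_pos hmq, hmq] at hm; exact absurd rfl hm
          · rw [if_neg hmq] at hm
            have hm3 : m = q0 + 3 := by
              by_contra hmm
              exact hm (hsupp i m (by rw [h2]; exact hmq)
                (by rw [h2, show q0 + 2 + 1 = q0 + 3 from by ring]; exact hmm))
            subst hm3
            exact ⟨e3m1, e03.symm, e13.symm, e23.symm⟩
        · intro m h1' h2' h3' h4'; rw [hwm2 i hni h2 m, if_neg h4']
        · exact Or.inl (by rw [hwm2 i hni h2 q0, if_neg e02])
        · exact Or.inl (by rw [hwm2 i hni h2 (q0 + 1), if_neg e12])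
      · by_cases hm2 : q i = q0 - 2
        · refine ⟨?_, ?_, ?_, ?_, ?_, ?_⟩
          · intro m; rw [hwm2' i hni h2 hm2 m]; split_ifs
            · exact hpos i _
            · exact le_refl 0
          · intro m; rw [hwm2' i hni h2 hm2 m]; split_ifs with hm
            · subst hm; exact le_refl _
            · exact hpos i m
          · intro m hm
            rw [hwm2' i hni h2 hm2 m] at hm
            by_cases hmq : m = q0 - 1
            · rw [if_pos hmq, hmq] at hm; exact absurd rfl hm
            · rw [if_neg hmq] at hm
              have hm3 : m = q0 - 2 := by
                by_contra hmm
                exact hm (hsupp i m (by rw [hm2]; exact hmm)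
                  (by rw [hm2, show q0 - 2 + 1 = q0 - 1 from by ring]; exact hmq))
              subst hm3
              exact ⟨em2m1, em20, em21, em22⟩
          · intro m h1' h2' h3' h4'; rw [hwm2' i hni h2 hm2 m, if_neg h1']
          · exact Or.inl (by rw [hwm2' i hni h2 hm2 q0, if_neg e0m1])
          · exact Or.inl (by rw [hwm2' i hni h2 hm2 (q0 + 1), if_neg e1m1])
        · have hni' := hni
          simp only [hNear] at hni'
          push_neg at hni'
          refine ⟨fun m => by rw [hwmfar i hni h2 hm2 m],
            fun m => by rw [hwmfar i hni h2 hm2 m]; exact hpos i m, ?_,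
            fun m _ _ _ _ => hwmfar i hni h2 hm2 m,
            Or.inl (hwmfar i hni h2 hm2 q0), Or.inl (hwmfar i hni h2 hm2 (q0 + 1))⟩
          intro m hm
          rw [hwmfar i hni h2 hm2 m] at hm
          by_cases hmq : m = q i
          · subst hmq
            exact ⟨hni'.2.2, hni'.1, hni'.2.1, h2⟩
          · have hmq1 : m = q i + 1 := by
              by_contra hmm
              exact hm (hsupp i m hmq hmm)
            subst hmq1
            refine ⟨fun hEq => hm2 (by linear_combination hEq),
              fun hEq => hni'.2.2 (by linear_combination hEq),
              fun hEq => hni'.1 (by linear_combination hEq),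
              fun hEq => hni'.2.1 (by linear_combination hEq)⟩
  have hw0 : ∀ i m, 0 ≤ w i m := fun i => (hF i).1
  have hwle : ∀ i m, w i m ≤ c i m := fun i => (hF i).2.1
  have hzsupp : ∀ i m, c i m ≠ w i m → (m ≠ q0 - 1 ∧ m ≠ q0 ∧ m ≠ q0 + 1 ∧ m ≠ q0 + 2) :=
    fun i => (hF i).2.2.1
  have hwsupp : ∀ i m, m ≠ q0 - 1 → m ≠ q0 → m ≠ q0 + 1 → m ≠ q0 + 2 → w i m = 0 :=
    fun i => (hF i).2.2.2.1
  have hwu : ∀ i, w i q0 = 0 ∨ w i (q0 + 2) = 0 := fun i => (hF i).2.2.2.2.1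
  have hwv : ∀ i, w i (q0 + 1) = 0 ∨ w i (q0 - 1) = 0 := fun i => (hF i).2.2.2.2.2
  have hρsum : ∀ i, ρ i = (∑ m, c i m) - ∑ m, w i m := fun i => by
    simp only [hρdef]; rw [Finset.sum_sub_distrib]
  have hρnear : ∀ i, Near i → ρ i = 0 := fun i hi => by
    simp only [hρdef]
    refine Finset.sum_eq_zero fun m _ => ?_
    rw [hwnearm i hi m, sub_self]
  have hDwc : ∀ i, (∑ m, |w i m - c i m|) = ρ i := by
    intro i
    simp only [hρdef]
    refine Finset.sum_congr rfl fun m _ => ?_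
    rw [abs_sub_comm, abs_of_nonneg (sub_nonneg.mpr (hwle i m))]
  have iso : ∀ x z : ZMod k → ℝ,
      (∀ m, 0 ≤ x m) → (∀ m, m ≠ q0 - 1 → m ≠ q0 → m ≠ q0 + 1 → m ≠ q0 + 2 → x m = 0) →
      (x q0 = 0 ∨ x (q0 + 2) = 0) → (x (q0 + 1) = 0 ∨ x (q0 - 1) = 0) →
      (∀ m, 0 ≤ z m) → (∀ m, m ≠ q0 - 1 → m ≠ q0 → m ≠ q0 + 1 → m ≠ q0 + 2 → z m = 0) →
      (z q0 = 0 ∨ z (q0 + 2) = 0) → (z (q0 + 1) = 0 ∨ z (q0 - 1) = 0) →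
      (∑ m, |x m - z m|) = |(x q0 - x (q0 + 2)) - (z q0 - z (q0 + 2))| +
        |(x (q0 + 1) - x (q0 - 1)) - (z (q0 + 1) - z (q0 - 1))| := by
    intro x z hx0 hxs hxu hxv hz0 hzs hzu hzv
    have hsub : (∑ m, |x m - z m|)
        = ∑ m ∈ ({q0 - 1, q0, q0 + 1, q0 + 2} : Finset (ZMod k)), |x m - z m| := by
      symm
      apply Finset.sum_subset (Finset.subset_univ _)
      intro m _ hm
      simp only [Finset.mem_insert, Finset.mem_singleton, not_or] at hm
      rw [hxs m hm.1 hm.2.1 hm.2.2.1 hm.2.2.2, hzs m hm.1 hm.2.1 hm.2.2.1 hm.2.2.2,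
        sub_zero, abs_zero]
    rw [hsub]
    rw [Finset.sum_insert (by
        simp only [Finset.mem_insert, Finset.mem_singleton]
        push_neg
        exact ⟨e0m1.symm, e1m1.symm, e2m1.symm⟩),
      Finset.sum_insert (by
        simp only [Finset.mem_insert, Finset.mem_singleton]
        push_neg
        exact ⟨e01, e02⟩),
      Finset.sum_insert (by simp only [Finset.mem_singleton]; exact e12),
      Finset.sum_singleton]
    have f1 := RectConeAux.pairL (x q0) (x (q0 + 2)) (z q0) (z (q0 + 2))
      (hx0 _) (hx0 _) (hz0 _) (hz0 _) hxu hzu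
    have f2 := RectConeAux.pairL (x (q0 + 1)) (x (q0 - 1)) (z (q0 + 1)) (z (q0 - 1))
      (hx0 _) (hx0 _) (hz0 _) (hz0 _) hxv hzv
    linarith
  have hkey : ∀ i, ¬Near i → (∑ m, c i m) + ((∑ m, c i0 m) - r i0) ≤ r i := by
    intro i hni
    simp only [hNear] at hni
    push_neg at hni
    have hdisj : ∀ m, c i0 m = 0 ∨ c i m = 0 := by
      intro m
      by_cases hm0 : c i0 m = 0
      · exact Or.inl hm0
      · right
        have hm : m = q0 ∨ m = q0 + 1 := by
          by_contra hmm
          push_neg at hmm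
          exact hm0 (hsupp i0 m hmm.1 hmm.2)
        rcases hm with rfl | rfl
        · exact hsupp i q0 (fun hEq => hni.1 hEq.symm)
            (fun hEq => hni.2.2 (by linear_combination -hEq))
        · exact hsupp i (q0 + 1) (fun hEq => hni.2.1 hEq.symm)
            (fun hEq => hni.1 (by linear_combination -hEq))
    have hD := RectConeAux.sum_abs_disj (c i0) (c i) (hpos i0) (hpos i) hdisj
    have hh := h i0 i
    rw [hD] at hh
    linarith
  have hCnf : ∀ i j, Near i → ¬Near j →
      (∑ m, |w i m - w j m|) ≤ (r i - ρ i) + (r j - ρ j) := by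
    intro i j hi hj
    have hsplit := RectConeAux.sum_abs_split (c i) (w j) (c j) (fun m => c j m - w j m)
      (fun m => sub_nonneg.mpr (hwle j m)) (fun m => by ring)
      (fun m hm => by
        have hm' : c j m ≠ w j m := fun hEq => hm (sub_eq_zero_of_eq hEq)
        obtain ⟨g1, g2, g3, g4⟩ := hzsupp j m hm'
        constructor
        · rcases hi with e | e | e
          · exact hsupp i m (by rw [e]; exact g2) (by rw [e]; exact g3)
          · exact hsupp i m (by rw [e]; exact g3)
              (by rw [e, show q0 + 1 + 1 = q0 + 2 from by ring]; exact g4)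
          · exact hsupp i m (by rw [e]; exact g1)
              (by rw [e, show q0 - 1 + 1 = q0 from by ring]; exact g2)
        · exact hwsupp j m g1 g2 g3 g4)
    have hwi : (∑ m, |w i m - w j m|) = ∑ m, |c i m - w j m| :=
      Finset.sum_congr rfl fun m _ => by rw [hwnearm i hi m]
    rw [hwi, hρnear i hi]
    have hρj : ρ j = ∑ m, (c j m - w j m) := by simp only [hρdef]
    rw [hρj]
    have hh := h i j
    linarith
  have hC : ∀ i j, (∑ m, |w i m - w j m|) ≤ (r i - ρ i) + (r j - ρ j) := by
    intro i j
    by_cases hi : Near i <;> by_cases hj : Near j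
    · have heq : (∑ m, |w i m - w j m|) = ∑ m, |c i m - c j m| :=
        Finset.sum_congr rfl fun m _ => by rw [hwnearm i hi m, hwnearm j hj m]
      rw [heq, hρnear i hi, hρnear j hj]
      have := h i j
      linarith
    · exact hCnf i j hi hj
    · have hsymm : (∑ m, |w i m - w j m|) = ∑ m, |w j m - w i m| :=
        Finset.sum_congr rfl fun m _ => abs_sub_comm _ _
      rw [hsymm]
      have := hCnf j i hj hi
      linarith
    · have tri := RectConeAux.sum_abs_tri (w i) (0 : ZMod k → ℝ) (w j)
      have hni : (∑ m, |w i m - (0 : ZMod k → ℝ) m|) = ∑ m, w i m :=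
        Finset.sum_congr rfl fun m _ => by
          rw [Pi.zero_apply, sub_zero, abs_of_nonneg (hw0 i m)]
      have hnj : (∑ m, |(0 : ZMod k → ℝ) m - w j m|) = ∑ m, w j m :=
        Finset.sum_congr rfl fun m _ => by
          rw [Pi.zero_apply, zero_sub, abs_neg, abs_of_nonneg (hw0 j m)]
      rw [hni, hnj] at tri
      have hki := hkey i hi
      have hkj := hkey j hj
      have hρi := hρsum i
      have hρj := hρsum j
      linarith
  set U : ι → ℝ := fun i => w i q0 - w i (q0 + 2) with hUdef
  set V : ι → ℝ := fun i => w i (q0 + 1) - w i (q0 - 1) with hVdef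
  have hCP : ∀ i j, |U i - U j| + |V i - V j| ≤ (r i - ρ i) + (r j - ρ j) := by
    intro i j
    have hiso := iso (w i) (w j) (hw0 i) (hwsupp i) (hwu i) (hwv i)
      (hw0 j) (hwsupp j) (hwu j) (hwv j)
    simp only [hUdef, hVdef]
    rw [← hiso]
    exact hC i j
  obtain ⟨yU, yV, hy, hyge⟩ := RectConeAux.plane_helly U V (fun i => r i - ρ i) i0 hCP
  have hyge' : U i0 + V i0 - (r i0 - ρ i0) ≤ yU + yV := hyge
  have hy' : ∀ i, |yU - U i| + |yV - V i| ≤ r i - ρ i := fun i => hy i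
  have hNi0 : Near i0 := Or.inl hq0.symm
  have hsum_i0 : (∑ m, c i0 m) = c i0 q0 + c i0 (q0 + 1) := by
    have hss : (∑ m ∈ ({q0, q0 + 1} : Finset (ZMod k)), c i0 m) = ∑ m, c i0 m := by
      apply Finset.sum_subset (Finset.subset_univ _)
      intro m _ hm
      simp only [Finset.mem_insert, Finset.mem_singleton, not_or] at hm
      exact hsupp i0 m hm.1 hm.2
    rw [← hss, Finset.sum_pair e01]
  have hUV : U i0 + V i0 = ∑ m, c i0 m := by
    simp only [hUdef, hVdef]
    rw [hwnearm i0 hNi0 q0, hwnearm i0 hNi0 (q0 + 2), hwnearm i0 hNi0 (q0 + 1),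
      hwnearm i0 hNi0 (q0 - 1)]
    rw [hsupp i0 (q0 + 2) e02.symm e12.symm, hsupp i0 (q0 - 1) e0m1.symm e1m1.symm, hsum_i0]
    ring
  have hypos : 0 < yU + yV := by
    have h0 := hρnear i0 hNi0
    linarith [hyge', hUV, hi0]
  set x : ZMod k → ℝ := fun m => if m = q0 then max yU 0 else if m = q0 + 1 then max yV 0
    else if m = q0 + 2 then max (-yU) 0 else if m = q0 - 1 then max (-yV) 0 else 0 with hxdef
  have hxq0 : x q0 = max yU 0 := by simp [hxdef]
  have hxq1 : x (q0 + 1) = max yV 0 := by simp [hxdef, e01.symm]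
  have hxq2 : x (q0 + 2) = max (-yU) 0 := by simp [hxdef, e02.symm, e12.symm]
  have hxqm : x (q0 - 1) = max (-yV) 0 := by
    simp [hxdef, e0m1.symm, e1m1.symm, e2m1.symm]
  have hx0 : ∀ m, 0 ≤ x m := fun m => by
    simp only [hxdef]
    split_ifs <;> first | exact le_max_right _ _ | exact le_refl 0
  have hxs : ∀ m, m ≠ q0 - 1 → m ≠ q0 → m ≠ q0 + 1 → m ≠ q0 + 2 → x m = 0 :=
    fun m h1 h2 h3 h4 => by
      simp only [hxdef]
      rw [if_neg h2, if_neg h3, if_neg h4, if_neg h1]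
  have hxu : x q0 = 0 ∨ x (q0 + 2) = 0 := by
    rcases le_total yU 0 with h' | h'
    · exact Or.inl (by rw [hxq0]; exact max_eq_right h')
    · exact Or.inr (by rw [hxq2]; exact max_eq_right (neg_nonpos.mpr h'))
  have hxv : x (q0 + 1) = 0 ∨ x (q0 - 1) = 0 := by
    rcases le_total yV 0 with h' | h'
    · exact Or.inl (by rw [hxq1]; exact max_eq_right h')
    · exact Or.inr (by rw [hxqm]; exact max_eq_right (neg_nonpos.mpr h'))
  have hu : x q0 - x (q0 + 2) = yU := by rw [hxq0, hxq2, RectConeAux.maxid]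
  have hv : x (q0 + 1) - x (q0 - 1) = yV := by rw [hxq1, hxqm, RectConeAux.maxid]
  have hmem : x ∈ rectCone k := by
    simp only [rectCone, Set.mem_iUnion, Set.mem_setOf_eq]
    rcases le_or_gt 0 yU with hU | hU
    · rcases le_or_gt 0 yV with hV | hV
      · refine ⟨q0, hx0, fun m h1 h2 => ?_⟩
        simp only [hxdef]
        rw [if_neg h1, if_neg h2, max_eq_right (neg_nonpos.mpr hU),
          max_eq_right (neg_nonpos.mpr hV), ite_self, ite_self]
      · refine ⟨q0 - 1, hx0, fun m h1 h2 => ?_⟩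
        rw [show q0 - 1 + 1 = q0 from by ring] at h2
        simp only [hxdef]
        rw [if_neg h2, if_neg h1, max_eq_right hV.le,
          max_eq_right (neg_nonpos.mpr hU), ite_self, ite_self]
    · have hV : 0 < yV := by linarith
      refine ⟨q0 + 1, hx0, fun m h1 h2 => ?_⟩
      rw [show q0 + 1 + 1 = q0 + 2 from by ring] at h2
      simp only [hxdef]
      rw [if_neg h1, if_neg h2, max_eq_right hU.le,
        max_eq_right (neg_nonpos.mpr hV.le), ite_self, ite_self]
  refine ⟨x, hmem, fun i => ?_⟩
  have tri := RectConeAux.sum_abs_tri x (w i) (c i)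
  have hisox := iso x (w i) hx0 hxs hxu hxv (hw0 i) (hwsupp i) (hwu i) (hwv i)
  rw [hu, hv] at hisox
  have hyi := hy' i
  simp only [hUdef, hVdef] at hyi
  rw [hDwc i, hisox] at tri
  have hρi0 : 0 ≤ ρ i := Finset.sum_nonneg fun m _ => sub_nonneg.mpr (hwle i m)
  linarith

/-- For every `k ≥ 4`, the order-`k` rectilinear cone with the metric induced from the
`L¹` norm of `ℝ^k` is hyperconvex: any family of closed balls, with centers in the cone
and radii pairwise compatible with the `L¹` distances between the centers, has a common
point in the cone. -/
theorem rectCone_hyperconvex (k : ℕ) [NeZero k] (hk : 4 ≤ k)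
    {ι : Type*} (c : ι → ZMod k → ℝ) (r : ι → ℝ) (hc : ∀ i, c i ∈ rectCone k)
    (h : ∀ i j, (∑ m, |c i m - c j m|) ≤ r i + r j) :
    ∃ x ∈ rectCone k, ∀ i, (∑ m, |x m - c i m|) ≤ r i := by
  classical
  choose q hq using fun i => Set.mem_iUnion.mp (hc i)
  have hpos : ∀ i m, 0 ≤ c i m := fun i => (hq i).1
  have hsupp : ∀ i m, m ≠ q i → m ≠ q i + 1 → c i m = 0 := fun i => (hq i).2
  by_cases H : ∀ i, (∑ m, c i m) ≤ r i
  · refine ⟨0, Set.mem_iUnion.mpr ⟨0, fun m => le_refl 0, fun m _ _ => rfl⟩, fun i => ?_⟩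
    calc (∑ m, |(0 : ZMod k → ℝ) m - c i m|) = ∑ m, c i m :=
        Finset.sum_congr rfl fun m _ => by
          rw [Pi.zero_apply, zero_sub, abs_neg, abs_of_nonneg (hpos i m)]
      _ ≤ r i := H i
  · push_neg at H
    obtain ⟨i0, hi0⟩ := H
    rcases (show k = 4 ∨ 5 ≤ k from by omega) with rfl | hk5
    · exact rectCone_case4 c r q hpos hsupp h i0
    · exact rectCone_case5 k hk5 c r q hpos hsupp h i0 hi0
end

section
/- The tight span of the 4-cycle is a unit Manhattan square: for X = ZMod 4 with the graph metric d(i,j) = min(|i−j|, 4−|i−j|) of the cycle C₄, there is a bijective isometry from E(X) (with the sup metric) onto the square [0,1] × [0,1] ⊆ ℝ² with the L¹ metric, which sends the extremal functions d(0,·), d(1,·), d(2,·), d(3,·) of the four cycle vertices to the corners (0,0), (1,0), (1,1), (0,1) respectively. -/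
/-- Isbell's tight span of a finite metric space `(X, d)`: the set of functions
`f : X → ℝ` with `f p = max_q (d p q - f q)` for every `p`. -/
def tightSpan {X : Type*} [Fintype X] [Nonempty X] (d : X → X → ℝ) : Set (X → ℝ) :=
  {f | ∀ p, f p = Finset.univ.sup' Finset.univ_nonempty fun q => d p q - f q}

/-- The sup metric on functions `X → ℝ` for finite `X`. -/
noncomputable def supDist {X : Type*} [Fintype X] [Nonempty X] (f g : X → ℝ) : ℝ :=
  Finset.univ.sup' Finset.univ_nonempty fun p => |f p - g p|

/-- The graph metric of the 4-cycle on `ZMod 4`: `d i j = min (|i - j|, 4 - |i - j|)`. -/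
noncomputable def d4 (i j : ZMod 4) : ℝ := min ((i - j).val : ℝ) ((j - i).val : ℝ)

section aux

lemma d4_00 : d4 0 0 = 0 := by
  rw [d4, show ((0:ZMod 4)-0).val = 0 from rfl]; norm_num
lemma d4_01 : d4 0 1 = 1 := by
  rw [d4, show ((0:ZMod 4)-1).val = 3 from rfl, show ((1:ZMod 4)-0).val = 1 from rfl]; norm_num
lemma d4_02 : d4 0 2 = 2 := by
  rw [d4, show ((0:ZMod 4)-2).val = 2 from rfl, show ((2:ZMod 4)-0).val = 2 from rfl]; norm_num
lemma d4_03 : d4 0 3 = 1 := by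
  rw [d4, show ((0:ZMod 4)-3).val = 1 from rfl, show ((3:ZMod 4)-0).val = 3 from rfl]; norm_num
lemma d4_10 : d4 1 0 = 1 := by
  rw [d4, show ((1:ZMod 4)-0).val = 1 from rfl, show ((0:ZMod 4)-1).val = 3 from rfl]; norm_num
lemma d4_11 : d4 1 1 = 0 := by
  rw [d4, show ((1:ZMod 4)-1).val = 0 from rfl]; norm_num
lemma d4_12 : d4 1 2 = 1 := by
  rw [d4, show ((1:ZMod 4)-2).val = 3 from rfl, show ((2:ZMod 4)-1).val = 1 from rfl]; norm_num
lemma d4_13 : d4 1 3 = 2 := by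
  rw [d4, show ((1:ZMod 4)-3).val = 2 from rfl, show ((3:ZMod 4)-1).val = 2 from rfl]; norm_num
lemma d4_20 : d4 2 0 = 2 := by
  rw [d4, show ((2:ZMod 4)-0).val = 2 from rfl, show ((0:ZMod 4)-2).val = 2 from rfl]; norm_num
lemma d4_21 : d4 2 1 = 1 := by
  rw [d4, show ((2:ZMod 4)-1).val = 1 from rfl, show ((1:ZMod 4)-2).val = 3 from rfl]; norm_num
lemma d4_22 : d4 2 2 = 0 := by
  rw [d4, show ((2:ZMod 4)-2).val = 0 from rfl]; norm_num
lemma d4_23 : d4 2 3 = 1 := by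
  rw [d4, show ((2:ZMod 4)-3).val = 3 from rfl, show ((3:ZMod 4)-2).val = 1 from rfl]; norm_num
lemma d4_30 : d4 3 0 = 1 := by
  rw [d4, show ((3:ZMod 4)-0).val = 3 from rfl, show ((0:ZMod 4)-3).val = 1 from rfl]; norm_num
lemma d4_31 : d4 3 1 = 2 := by
  rw [d4, show ((3:ZMod 4)-1).val = 2 from rfl, show ((1:ZMod 4)-3).val = 2 from rfl]; norm_num
lemma d4_32 : d4 3 2 = 1 := by
  rw [d4, show ((3:ZMod 4)-2).val = 1 from rfl, show ((2:ZMod 4)-3).val = 3 from rfl]; norm_num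
lemma d4_33 : d4 3 3 = 0 := by
  rw [d4, show ((3:ZMod 4)-3).val = 0 from rfl]; norm_num

lemma forall_zmod4 (P : ZMod 4 → Prop) : (∀ q, P q) ↔ P 0 ∧ P 1 ∧ P 2 ∧ P 3 := by
  constructor
  · intro h; exact ⟨h 0, h 1, h 2, h 3⟩
  · rintro ⟨h0,h1,h2,h3⟩ q; fin_cases q <;> assumption

lemma sup4 (g : ZMod 4 → ℝ) : Finset.univ.sup' Finset.univ_nonempty g
    = max (g 0) (max (g 1) (max (g 2) (g 3))) := by
  apply le_antisymm
  · apply Finset.sup'_le; intro q _; fin_cases q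
    · exact le_max_left _ _
    · exact le_trans (le_max_left _ _) (le_max_right _ _)
    · exact le_trans (le_trans (le_max_left _ _) (le_max_right _ _)) (le_max_right _ _)
    · exact le_trans (le_trans (le_max_right _ _) (le_max_right _ _)) (le_max_right _ _)
  · exact max_le (Finset.le_sup' g (Finset.mem_univ _)) (max_le (Finset.le_sup' g (Finset.mem_univ _))
      (max_le (Finset.le_sup' g (Finset.mem_univ _)) (Finset.le_sup' g (Finset.mem_univ _))))

lemma max4_attain {m a b c d : ℝ} (h : m = max a (max b (max c d))) :
    m = a ∨ m = b ∨ m = c ∨ m = d := by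
  rcases max_choice a (max b (max c d)) with h1|h1
  · exact Or.inl (h.trans h1)
  rcases max_choice b (max c d) with h2|h2
  · exact Or.inr (Or.inl ((h.trans h1).trans h2))
  rcases max_choice c d with h3|h3
  · exact Or.inr (Or.inr (Or.inl (((h.trans h1).trans h2).trans h3)))
  · exact Or.inr (Or.inr (Or.inr (((h.trans h1).trans h2).trans h3)))

lemma max4_ge1 {m a b c d : ℝ} (h : m = max a (max b (max c d))) : a ≤ m := h ▸ le_max_left _ _
lemma max4_ge2 {m a b c d : ℝ} (h : m = max a (max b (max c d))) : b ≤ m :=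
  h ▸ le_max_of_le_right (le_max_left _ _)
lemma max4_ge3 {m a b c d : ℝ} (h : m = max a (max b (max c d))) : c ≤ m :=
  h ▸ le_max_of_le_right (le_max_of_le_right (le_max_left _ _))
lemma max4_ge4 {m a b c d : ℝ} (h : m = max a (max b (max c d))) : d ≤ m :=
  h ▸ le_max_of_le_right (le_max_of_le_right (le_max_right _ _))

/-- Characterization of the tight span of the 4-cycle. -/
lemma mem_tightSpan_iff (f : ZMod 4 → ℝ) : f ∈ tightSpan d4 ↔
    (f 0 + f 2 = 2 ∧ f 1 + f 3 = 2 ∧ 1 ≤ f 0 + f 1 ∧ 1 ≤ f 1 + f 2 ∧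
      1 ≤ f 2 + f 3 ∧ 1 ≤ f 3 + f 0 ∧ 0 ≤ f 0 ∧ 0 ≤ f 1) := by
  have hmem : f ∈ tightSpan d4 ↔
      (f 0 = max (0 - f 0) (max (1 - f 1) (max (2 - f 2) (1 - f 3))) ∧
       f 1 = max (1 - f 0) (max (0 - f 1) (max (1 - f 2) (2 - f 3))) ∧
       f 2 = max (2 - f 0) (max (1 - f 1) (max (0 - f 2) (1 - f 3))) ∧
       f 3 = max (1 - f 0) (max (2 - f 1) (max (1 - f 2) (0 - f 3)))) := by
    show (∀ p, f p = _) ↔ _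
    rw [forall_zmod4 (fun p => f p = Finset.univ.sup' Finset.univ_nonempty fun q => d4 p q - f q)]
    rw [sup4, sup4, sup4, sup4]
    simp only [d4_00, d4_01, d4_02, d4_03, d4_10, d4_11, d4_12, d4_13,
      d4_20, d4_21, d4_22, d4_23, d4_30, d4_31, d4_32, d4_33]
  rw [hmem]
  constructor
  · rintro ⟨e0, e1, e2, e3⟩
    have g00 := max4_ge1 e0; have g01 := max4_ge2 e0; have g02 := max4_ge3 e0; have g03 := max4_ge4 e0
    have g10 := max4_ge1 e1; have g11 := max4_ge2 e1; have g12 := max4_ge3 e1; have g13 := max4_ge4 e1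
    have g20 := max4_ge1 e2; have g21 := max4_ge2 e2; have g22 := max4_ge3 e2; have g23 := max4_ge4 e2
    have g30 := max4_ge1 e3; have g31 := max4_ge2 e3; have g32 := max4_ge3 e3; have g33 := max4_ge4 e3
    have h02 : f 0 + f 2 = 2 := by
      rcases max4_attain e0 with h|h|h|h <;> rcases max4_attain e2 with h'|h'|h'|h' <;> linarith
    have h13 : f 1 + f 3 = 2 := by
      rcases max4_attain e1 with h|h|h|h <;> rcases max4_attain e3 with h'|h'|h'|h' <;> linarith
    exact ⟨h02, h13, by linarith, by linarith, by linarith, by linarith, by linarith, by linarith⟩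
  · rintro ⟨h02, h13, h01, h12, h23, h30, h0, h1⟩
    have h2 : 0 ≤ f 2 := by linarith
    have h3 : 0 ≤ f 3 := by linarith
    refine ⟨?_, ?_, ?_, ?_⟩
    · apply le_antisymm
      · calc f 0 = 2 - f 2 := by linarith
          _ ≤ _ := le_max_of_le_right (le_max_of_le_right (le_max_left _ _))
      · exact max_le (by linarith) (max_le (by linarith) (max_le (by linarith) (by linarith)))
    · apply le_antisymm
      · calc f 1 = 2 - f 3 := by linarith
          _ ≤ _ := le_max_of_le_right (le_max_of_le_right (le_max_right _ _))
      · exact max_le (by linarith) (max_le (by linarith) (max_le (by linarith) (by linarith)))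
    · apply le_antisymm
      · calc f 2 = 2 - f 0 := by linarith
          _ ≤ _ := le_max_left _ _
      · exact max_le (by linarith) (max_le (by linarith) (max_le (by linarith) (by linarith)))
    · apply le_antisymm
      · calc f 3 = 2 - f 1 := by linarith
          _ ≤ _ := le_max_of_le_right (le_max_left _ _)
      · exact max_le (by linarith) (max_le (by linarith) (max_le (by linarith) (by linarith)))

lemma abs_add_abs_sub (a b : ℝ) : |a + b| + |a - b| = 2 * max |a| |b| := by
  rcases abs_cases (a + b) with ⟨h1, h1'⟩|⟨h1, h1'⟩ <;> rcases abs_cases (a - b) with ⟨h3, h3'⟩|⟨h3, h3'⟩ <;>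
    rw [h1, h3]
  · rw [abs_of_nonneg (show (0:ℝ) ≤ a by linarith),
      max_eq_left (abs_le.mpr ⟨by linarith, by linarith⟩)]; ring
  · rw [abs_of_nonneg (show (0:ℝ) ≤ b by linarith),
      max_eq_right (abs_le.mpr ⟨by linarith, by linarith⟩)]; ring
  · rw [abs_of_nonpos (show b ≤ (0:ℝ) by linarith),
      max_eq_right (abs_le.mpr ⟨by linarith, by linarith⟩)]; ring
  · rw [abs_of_nonpos (show a ≤ (0:ℝ) by linarith),
      max_eq_left (abs_le.mpr ⟨by linarith, by linarith⟩)]; ring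

lemma max_red (x y : ℝ) : max x (max y (max x y)) = max x y := by
  rcases le_total x y with h|h
  · simp [max_eq_right h]
  · rw [max_eq_left h, max_comm y x, max_eq_left h, max_self]

end aux

/-- The tight span of the 4-cycle is a unit Manhattan square: there is a bijective
isometry from the tight span of `C₄` (with the sup metric) onto `[0,1] × [0,1]` with the
`L¹` metric, carrying the extremal functions of the four cycle vertices to the four
corners of the square. -/
theorem tightSpan_fourCycle_eq_unit_square :
    ∃ φ : (ZMod 4 → ℝ) → ℝ × ℝ,
      Set.BijOn φ (tightSpan d4) (Set.Icc (0 : ℝ) 1 ×ˢ Set.Icc (0 : ℝ) 1) ∧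
      (∀ f ∈ tightSpan d4, ∀ g ∈ tightSpan d4,
        |(φ f).1 - (φ g).1| + |(φ f).2 - (φ g).2| = supDist f g) ∧
      φ (d4 0) = (0, 0) ∧ φ (d4 1) = (1, 0) ∧ φ (d4 2) = (1, 1) ∧ φ (d4 3) = (0, 1) := by
  refine ⟨fun f => ((f 0 + f 3 - 1) / 2, (f 0 + f 1 - 1) / 2), ⟨?_, ?_, ?_⟩, ?_, ?_, ?_, ?_, ?_⟩
  · -- MapsTo
    intro f hf
    obtain ⟨h02, h13, h01, h12, h23, h30, h0, h1⟩ := (mem_tightSpan_iff f).mp hf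
    constructor
    · constructor <;> [linarith; linarith]
    · constructor <;> [linarith; linarith]
  · -- InjOn
    intro f hf g hg h
    obtain ⟨f02, f13, _, _, _, _, _, _⟩ := (mem_tightSpan_iff f).mp hf
    obtain ⟨g02, g13, _, _, _, _, _, _⟩ := (mem_tightSpan_iff g).mp hg
    have h1 : (f 0 + f 3 - 1) / 2 = (g 0 + g 3 - 1) / 2 := congrArg Prod.fst h
    have h2 : (f 0 + f 1 - 1) / 2 = (g 0 + g 1 - 1) / 2 := congrArg Prod.snd h
    funext p
    revert p
    rw [forall_zmod4 (fun p => f p = g p)]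
    refine ⟨by linarith, by linarith, by linarith, by linarith⟩
  · -- SurjOn
    rintro ⟨x, y⟩ ⟨⟨hx0, hx1⟩, ⟨hy0, hy1⟩⟩
    refine ⟨fun p => if p = 0 then x + y else if p = 1 then 1 - x + y
      else if p = 2 then 2 - x - y else x + 1 - y, ?_, ?_⟩
    · rw [mem_tightSpan_iff]
      simp only [if_pos, if_neg (by decide : (1:ZMod 4) ≠ 0),
        if_neg (by decide : (2:ZMod 4) ≠ 0), if_neg (by decide : (2:ZMod 4) ≠ 1),
        if_neg (by decide : (3:ZMod 4) ≠ 0), if_neg (by decide : (3:ZMod 4) ≠ 1),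
        if_neg (by decide : (3:ZMod 4) ≠ 2), ite_true, if_pos rfl]
      refine ⟨by ring, by ring, by linarith, by linarith, by linarith, by linarith,
        by linarith, by linarith⟩
    · simp only [if_pos rfl, if_neg (by decide : (1:ZMod 4) ≠ 0),
        if_neg (by decide : (3:ZMod 4) ≠ 0), if_neg (by decide : (3:ZMod 4) ≠ 1),
        if_neg (by decide : (3:ZMod 4) ≠ 2), ite_true]
      rw [Prod.mk.injEq]; constructor <;> ring
  · -- isometry
    intro f hf g hg
    obtain ⟨f02, f13, _, _, _, _, _, _⟩ := (mem_tightSpan_iff f).mp hf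
    obtain ⟨g02, g13, _, _, _, _, _, _⟩ := (mem_tightSpan_iff g).mp hg
    unfold supDist
    rw [sup4]
    have e2 : f 2 - g 2 = -(f 0 - g 0) := by linarith
    have e1 : f 1 - g 1 = -(f 3 - g 3) := by linarith
    simp only [e1, e2, abs_neg]
    rw [max_red |f 0 - g 0| |f 3 - g 3|]
    have hk := abs_add_abs_sub (f 0 - g 0) (f 3 - g 3)
    have lhs1 : ((f 0 + f 3 - 1) / 2 - (g 0 + g 3 - 1) / 2) = ((f 0 - g 0) + (f 3 - g 3)) / 2 := by
      ring
    have lhs2 : ((f 0 + f 1 - 1) / 2 - (g 0 + g 1 - 1) / 2) = ((f 0 - g 0) - (f 3 - g 3)) / 2 := by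
      rw [e1] at *; linarith [e1]
    simp only [lhs1, lhs2]
    rw [abs_div, abs_div, abs_two]
    linarith
  · show ((d4 0 0 + d4 0 3 - 1) / 2, (d4 0 0 + d4 0 1 - 1) / 2) = ((0:ℝ), (0:ℝ))
    rw [d4_00, d4_03, d4_01]; norm_num
  · show ((d4 1 0 + d4 1 3 - 1) / 2, (d4 1 0 + d4 1 1 - 1) / 2) = ((1:ℝ), (0:ℝ))
    rw [d4_10, d4_13, d4_11]; norm_num
  · show ((d4 2 0 + d4 2 3 - 1) / 2, (d4 2 0 + d4 2 1 - 1) / 2) = ((1:ℝ), (1:ℝ))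
    rw [d4_20, d4_23, d4_21]; norm_num
  · show ((d4 3 0 + d4 3 3 - 1) / 2, (d4 3 0 + d4 3 1 - 1) / 2) = ((0:ℝ), (1:ℝ))
    rw [d4_30, d4_33, d4_31]; norm_num
end

section
/- Let X = {a,b,c,d} be the metric space with d(c,d) = 2 and all other distances between distinct points equal to 1 (the graph metric of the complete graph K₄ minus the edge cd). Then E(X) with the sup metric is isometric, by a bijection, to the subset U of ℝ⁴ with the L¹ metric given by U = ([0,1/2] × [0,1/2] × {0} × {0}) ∪ ({(0,0)} × [0,1/2] × {0}) ∪ ({(1/2,1/2)} × {0} × [0,1/2]) — a Manhattan square of side 1/2 with two whiskers of length 1/2 attached at opposite corners — with the isometry sending d(a,·), d(b,·), d(c,·), d(d,·) to (1/2,0,0,0), (0,1/2,0,0), (0,0,1/2,0), (1/2,1/2,0,1/2) respectively. -/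
/-- The graph metric of `K₄` minus the edge `cd`, on vertices `a = 0`, `b = 1`,
`c = 2`, `d = 3`: the distance from `c` to `d` is `2` and all other distances between
distinct vertices are `1`. -/
def dK : Fin 4 → Fin 4 → ℝ := fun i j =>
  if i = j then 0 else if (i = 2 ∧ j = 3) ∨ (i = 3 ∧ j = 2) then 2 else 1

/-- A Manhattan square of side `1/2` in `ℝ⁴` with two whiskers of length `1/2` attached
at opposite corners:
`([0,1/2] × [0,1/2] × {0} × {0}) ∪ ({(0,0)} × [0,1/2] × {0}) ∪ ({(1/2,1/2)} × {0} × [0,1/2])`. -/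
def squareWithWhiskers : Set (Fin 4 → ℝ) :=
  {x | x 0 ∈ Set.Icc (0 : ℝ) (1 / 2) ∧ x 1 ∈ Set.Icc (0 : ℝ) (1 / 2) ∧ x 2 = 0 ∧ x 3 = 0} ∪
  {x | x 0 = 0 ∧ x 1 = 0 ∧ x 2 ∈ Set.Icc (0 : ℝ) (1 / 2) ∧ x 3 = 0} ∪
  {x | x 0 = 1 / 2 ∧ x 1 = 1 / 2 ∧ x 2 = 0 ∧ x 3 ∈ Set.Icc (0 : ℝ) (1 / 2)}

/-- Parametrization of the tight span by the square-with-whiskers. -/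
noncomputable def psiMap (x : Fin 4 → ℝ) : Fin 4 → ℝ :=
  ![1/2 - x 0 + x 1 + x 2 + x 3,
    1/2 + x 0 - x 1 + x 2 + x 3,
    1/2 + x 0 + x 1 - x 2 + x 3,
    3/2 - x 0 - x 1 + x 2 - x 3]

/-- The isometry from the tight span to the square-with-whiskers. -/
noncomputable def phiMap (f : Fin 4 → ℝ) : Fin 4 → ℝ :=
  ![max 0 (min (1/2) ((2 * f 2 - 1 + f 1 - f 0)/4)),
    max 0 (min (1/2) ((2 * f 2 - 1 + f 0 - f 1)/4)),
    max 0 (1/2 - f 2), max 0 (1/2 - f 3)]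

lemma mem_sww_iff (x : Fin 4 → ℝ) : x ∈ squareWithWhiskers ↔
    (0 ≤ x 0 ∧ x 0 ≤ 1/2 ∧ 0 ≤ x 1 ∧ x 1 ≤ 1/2 ∧ x 2 = 0 ∧ x 3 = 0) ∨
    (x 0 = 0 ∧ x 1 = 0 ∧ 0 ≤ x 2 ∧ x 2 ≤ 1/2 ∧ x 3 = 0) ∨
    (x 0 = 1/2 ∧ x 1 = 1/2 ∧ x 2 = 0 ∧ 0 ≤ x 3 ∧ x 3 ≤ 1/2) := by
  simp only [squareWithWhiskers, Set.mem_union, Set.mem_setOf_eq, Set.mem_Icc]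
  norm_num
  tauto

lemma clamp_eq {v t : ℝ}
    (h : (t = v ∧ 0 ≤ v ∧ v ≤ 1/2) ∨ (t = 0 ∧ v ≤ 0) ∨ (t = 1/2 ∧ 1/2 ≤ v)) :
    max 0 (min (1/2) v) = t := by
  rcases h with ⟨rfl, h1, h2⟩ | ⟨rfl, h1⟩ | ⟨rfl, h1⟩
  · rw [min_eq_right h2, max_eq_right h1]
  · rw [min_eq_right (by linarith), max_eq_left h1]
  · rw [min_eq_left h1, max_eq_right (by norm_num)]

lemma le_sup'_of_eq {g : Fin 4 → ℝ} (q : Fin 4) {v : ℝ} (h : v = g q) :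
    v ≤ Finset.univ.sup' Finset.univ_nonempty g :=
  h ▸ Finset.le_sup' g (Finset.mem_univ q)

set_option maxHeartbeats 1000000 in
lemma phi_psi {x : Fin 4 → ℝ} (hx : x ∈ squareWithWhiskers) : phiMap (psiMap x) = x := by
  rw [mem_sww_iff] at hx
  have h0 : phiMap (psiMap x) 0 = x 0 := by
    simp only [phiMap, psiMap, Matrix.cons_val_zero, Matrix.cons_val_one, Matrix.head_cons,
      Matrix.cons_val_two, Matrix.tail_cons]
    apply clamp_eq
    rcases hx with ⟨h1, h2, h3, h4, h5, h6⟩ | ⟨h1, h2, h3, h4, h5⟩ | ⟨h1, h2, h3, h4, h5⟩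
    · exact Or.inl ⟨by linarith, by linarith, by linarith⟩
    · exact Or.inr (Or.inl ⟨by linarith, by linarith⟩)
    · exact Or.inr (Or.inr ⟨by linarith, by linarith⟩)
  have h1 : phiMap (psiMap x) 1 = x 1 := by
    simp only [phiMap, psiMap, Matrix.cons_val_zero, Matrix.cons_val_one, Matrix.head_cons,
      Matrix.cons_val_two, Matrix.tail_cons]
    apply clamp_eq
    rcases hx with ⟨h1, h2, h3, h4, h5, h6⟩ | ⟨h1, h2, h3, h4, h5⟩ | ⟨h1, h2, h3, h4, h5⟩
    · exact Or.inl ⟨by linarith, by linarith, by linarith⟩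
    · exact Or.inr (Or.inl ⟨by linarith, by linarith⟩)
    · exact Or.inr (Or.inr ⟨by linarith, by linarith⟩)
  have h2 : phiMap (psiMap x) 2 = x 2 := by
    simp only [phiMap, psiMap, Matrix.cons_val_zero, Matrix.cons_val_one, Matrix.head_cons,
      Matrix.cons_val_two, Matrix.tail_cons]
    rcases hx with ⟨h1, h2, h3, h4, h5, h6⟩ | ⟨h1, h2, h3, h4, h5⟩ | ⟨h1, h2, h3, h4, h5⟩
    · rw [max_eq_left (by linarith)]; linarith
    · rw [max_eq_right (by linarith)]; linarith
    · rw [max_eq_left (by linarith)]; linarith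
  have h3 : phiMap (psiMap x) 3 = x 3 := by
    simp only [phiMap, psiMap, Matrix.cons_val_zero, Matrix.cons_val_one, Matrix.head_cons,
      Matrix.cons_val_two, Matrix.tail_cons, Matrix.cons_val_three]
    rcases hx with ⟨h1, h2, h3, h4, h5, h6⟩ | ⟨h1, h2, h3, h4, h5⟩ | ⟨h1, h2, h3, h4, h5⟩
    · rw [max_eq_left (by linarith)]; linarith
    · rw [max_eq_left (by linarith)]; linarith
    · rw [max_eq_right (by linarith)]; linarith
  funext m
  fin_cases m
  exacts [h0, h1, h2, h3]

set_option maxHeartbeats 2000000 in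
lemma psi_mem_tightSpan {x : Fin 4 → ℝ} (hx : x ∈ squareWithWhiskers) :
    psiMap x ∈ tightSpan dK := by
  rw [mem_sww_iff] at hx
  intro p
  refine le_antisymm ?_ (Finset.sup'_le _ _ fun q _ => ?_)
  · -- pick a witness q for each case
    rcases hx with ⟨h1, h2, h3, h4, h5, h6⟩ | ⟨h1, h2, h3, h4, h5⟩ | ⟨h1, h2, h3, h4, h5⟩ <;>
      fin_cases p
    · exact le_sup'_of_eq 1 (by simp [dK, psiMap]; linarith)
    · exact le_sup'_of_eq 0 (by simp [dK, psiMap]; linarith)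
    · exact le_sup'_of_eq 3 (by simp [dK, psiMap]; linarith)
    · exact le_sup'_of_eq 2 (by simp [dK, psiMap]; linarith)
    · exact le_sup'_of_eq 2 (by simp [dK, psiMap]; linarith)
    · exact le_sup'_of_eq 2 (by simp [dK, psiMap]; linarith)
    · exact le_sup'_of_eq 3 (by simp [dK, psiMap]; linarith)
    · exact le_sup'_of_eq 2 (by simp [dK, psiMap]; linarith)
    · exact le_sup'_of_eq 3 (by simp [dK, psiMap]; linarith)
    · exact le_sup'_of_eq 3 (by simp [dK, psiMap]; linarith)
    · exact le_sup'_of_eq 3 (by simp [dK, psiMap]; linarith)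
    · exact le_sup'_of_eq 2 (by simp [dK, psiMap]; linarith)
  · rcases hx with ⟨h1, h2, h3, h4, h5, h6⟩ | ⟨h1, h2, h3, h4, h5⟩ | ⟨h1, h2, h3, h4, h5⟩ <;>
      fin_cases p <;> fin_cases q <;> simp [dK, psiMap] <;> linarith

set_option maxHeartbeats 2000000 in
/-- Every point of the tight span is parametrized by the square with whiskers. -/
lemma exists_param {f : Fin 4 → ℝ} (hf : f ∈ tightSpan dK) :
    ∃ x ∈ squareWithWhiskers, f = psiMap x := by
  have hge : ∀ p q, dK p q ≤ f p + f q := by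
    intro p q
    have h := (hf p).ge.trans' (Finset.le_sup' (fun q => dK p q - f q) (Finset.mem_univ q))
    linarith
  have hatt : ∀ p : Fin 4, ∃ q, f p = dK p q - f q := by
    intro p
    obtain ⟨q, -, hq⟩ := Finset.exists_mem_eq_sup' Finset.univ_nonempty (fun q => dK p q - f q)
    exact ⟨q, (hf p).trans hq⟩
  have n0 : 0 ≤ f 0 := by have := hge 0 0; simp [dK] at this; linarith
  have n1 : 0 ≤ f 1 := by have := hge 1 1; simp [dK] at this; linarith
  have n2 : 0 ≤ f 2 := by have := hge 2 2; simp [dK] at this; linarith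
  have n3 : 0 ≤ f 3 := by have := hge 3 3; simp [dK] at this; linarith
  have e01 : 1 ≤ f 0 + f 1 := by have := hge 0 1; simpa [dK] using this
  have e02 : 1 ≤ f 0 + f 2 := by have := hge 0 2; simpa [dK] using this
  have e03 : 1 ≤ f 0 + f 3 := by have := hge 0 3; simpa [dK] using this
  have e12 : 1 ≤ f 1 + f 2 := by have := hge 1 2; simpa [dK] using this
  have e13 : 1 ≤ f 1 + f 3 := by have := hge 1 3; simpa [dK] using this
  have e23 : 2 ≤ f 2 + f 3 := by have := hge 2 3; simpa [dK] using this
  -- Step 1 : f 2 + f 3 = 2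
  have hcd : f 2 + f 3 = 2 := by
    obtain ⟨q2, hq2⟩ := hatt 2
    obtain ⟨q3, hq3⟩ := hatt 3
    fin_cases q2 <;> fin_cases q3 <;> simp [dK] at hq2 hq3 <;> linarith
  obtain ⟨q0, hq0⟩ := hatt 0
  obtain ⟨q1, hq1⟩ := hatt 1
  rcases le_or_gt (f 2) (1/2) with hc | hc
  · -- whisker c
    have key : f 0 = 1 - f 2 ∧ f 1 = 1 - f 2 := by
      fin_cases q0 <;> fin_cases q1 <;> simp [dK] at hq0 hq1 <;>
        exact ⟨by linarith, by linarith⟩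
    refine ⟨![0, 0, 1/2 - f 2, 0], ?_, ?_⟩
    · rw [mem_sww_iff]
      refine Or.inr (Or.inl ⟨?_, ?_, ?_, ?_, ?_⟩) <;> simp <;> linarith
    · funext p
      fin_cases p <;> simp [psiMap] <;> linarith [key.1, key.2]
  rcases le_or_gt (f 3) (1/2) with hd | hd
  · -- whisker d
    have key : f 0 = 1 - f 3 ∧ f 1 = 1 - f 3 := by
      fin_cases q0 <;> fin_cases q1 <;> simp [dK] at hq0 hq1 <;>
        exact ⟨by linarith, by linarith⟩
    refine ⟨![1/2, 1/2, 0, 1/2 - f 3], ?_, ?_⟩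
    · rw [mem_sww_iff]
      refine Or.inr (Or.inr ⟨?_, ?_, ?_, ?_, ?_⟩) <;> simp <;> linarith
    · funext p
      fin_cases p <;> simp [psiMap] <;> linarith [key.1, key.2]
  · -- square
    have key : f 0 + f 1 = 1 ∧ f 1 + f 2 ≤ 2 ∧ f 0 + f 2 ≤ 2 := by
      fin_cases q0 <;> fin_cases q1 <;> simp [dK] at hq0 hq1 <;>
        exact ⟨by linarith, by linarith, by linarith⟩
    obtain ⟨k1, k2, k3⟩ := key
    refine ⟨![(f 1 + f 2 - 1)/2, (f 0 + f 2 - 1)/2, 0, 0], ?_, ?_⟩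
    · rw [mem_sww_iff]
      refine Or.inl ⟨?_, ?_, ?_, ?_, ?_, ?_⟩ <;> simp <;> linarith
    · funext p
      fin_cases p <;> simp [psiMap] <;> linarith

set_option maxHeartbeats 1000000 in
/-- The isometry identity on the parametrized tight span. -/
lemma iso_eq {x y : Fin 4 → ℝ} (hx : x ∈ squareWithWhiskers) (hy : y ∈ squareWithWhiskers) :
    (∑ m, |x m - y m|) = supDist (psiMap x) (psiMap y) := by
  set s := supDist (psiMap x) (psiMap y) with hs
  have kp : ∀ p : Fin 4, psiMap x p - psiMap y p ≤ s ∧ -(psiMap x p - psiMap y p) ≤ s := by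
    intro p
    have h := Finset.le_sup' (fun p => |psiMap x p - psiMap y p|) (Finset.mem_univ p)
    exact ⟨(le_abs_self _).trans h, (neg_le_abs _).trans h⟩
  have k0 := kp 0; have k1 := kp 1; have k2 := kp 2; have k3 := kp 3
  simp only [psiMap, Matrix.cons_val_zero, Matrix.cons_val_one, Matrix.head_cons,
    Matrix.cons_val_two, Matrix.tail_cons, Matrix.cons_val_three] at k0 k1 k2 k3
  rw [Fin.sum_univ_four]
  apply le_antisymm
  · rw [mem_sww_iff] at hx hy
    rcases hx with ⟨a1, a2, a3, a4, a5, a6⟩ | ⟨a1, a2, a3, a4, a5⟩ | ⟨a1, a2, a3, a4, a5⟩ <;>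
    rcases hy with ⟨b1, b2, b3, b4, b5, b6⟩ | ⟨b1, b2, b3, b4, b5⟩ | ⟨b1, b2, b3, b4, b5⟩
    · -- square / square
      have z2 : |x 2 - y 2| = 0 := by rw [a5, b5]; simp
      have z3 : |x 3 - y 3| = 0 := by rw [a6, b6]; simp
      rcases abs_cases (x 0 - y 0) with ⟨c0, d0⟩ | ⟨c0, d0⟩ <;>
        rcases abs_cases (x 1 - y 1) with ⟨c1, d1⟩ | ⟨c1, d1⟩ <;>
        linarith [k0.1, k0.2, k2.1, k2.2]
    · -- square / whisker c
      have h0 : |x 0 - y 0| = x 0 - y 0 := abs_of_nonneg (by linarith)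
      have h1 : |x 1 - y 1| = x 1 - y 1 := abs_of_nonneg (by linarith)
      have h2 : |x 2 - y 2| = -(x 2 - y 2) := abs_of_nonpos (by linarith)
      have h3 : |x 3 - y 3| = 0 := by rw [a6, b5]; simp
      linarith [k3.2]
    · -- square / whisker d
      have h0 : |x 0 - y 0| = -(x 0 - y 0) := abs_of_nonpos (by linarith)
      have h1 : |x 1 - y 1| = -(x 1 - y 1) := abs_of_nonpos (by linarith)
      have h2 : |x 2 - y 2| = 0 := by rw [a5, b3]; simp
      have h3 : |x 3 - y 3| = -(x 3 - y 3) := abs_of_nonpos (by linarith)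
      linarith [k2.2]
    · -- whisker c / square
      have h0 : |x 0 - y 0| = -(x 0 - y 0) := abs_of_nonpos (by linarith)
      have h1 : |x 1 - y 1| = -(x 1 - y 1) := abs_of_nonpos (by linarith)
      have h2 : |x 2 - y 2| = x 2 - y 2 := abs_of_nonneg (by linarith)
      have h3 : |x 3 - y 3| = 0 := by rw [a5, b6]; simp
      linarith [k3.1]
    · -- whisker c / whisker c
      have h0 : |x 0 - y 0| = 0 := by rw [a1, b1]; simp
      have h1 : |x 1 - y 1| = 0 := by rw [a2, b2]; simp
      have h3 : |x 3 - y 3| = 0 := by rw [a5, b5]; simp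
      rcases abs_cases (x 2 - y 2) with ⟨c2, d2⟩ | ⟨c2, d2⟩ <;> linarith [k0.1, k0.2]
    · -- whisker c / whisker d
      have h0 : |x 0 - y 0| = -(x 0 - y 0) := abs_of_nonpos (by linarith)
      have h1 : |x 1 - y 1| = -(x 1 - y 1) := abs_of_nonpos (by linarith)
      have h2 : |x 2 - y 2| = x 2 - y 2 := abs_of_nonneg (by linarith)
      have h3 : |x 3 - y 3| = -(x 3 - y 3) := abs_of_nonpos (by linarith)
      linarith [k3.1]
    · -- whisker d / square
      have h0 : |x 0 - y 0| = x 0 - y 0 := abs_of_nonneg (by linarith)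
      have h1 : |x 1 - y 1| = x 1 - y 1 := abs_of_nonneg (by linarith)
      have h2 : |x 2 - y 2| = 0 := by rw [a3, b5]; simp
      have h3 : |x 3 - y 3| = x 3 - y 3 := abs_of_nonneg (by linarith)
      linarith [k2.1]
    · -- whisker d / whisker c
      have h0 : |x 0 - y 0| = x 0 - y 0 := abs_of_nonneg (by linarith)
      have h1 : |x 1 - y 1| = x 1 - y 1 := abs_of_nonneg (by linarith)
      have h2 : |x 2 - y 2| = -(x 2 - y 2) := abs_of_nonpos (by linarith)
      have h3 : |x 3 - y 3| = x 3 - y 3 := abs_of_nonneg (by linarith)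
      linarith [k2.1]
    · -- whisker d / whisker d
      have h0 : |x 0 - y 0| = 0 := by rw [a1, b1]; simp
      have h1 : |x 1 - y 1| = 0 := by rw [a2, b2]; simp
      have h2 : |x 2 - y 2| = 0 := by rw [a3, b3]; simp
      rcases abs_cases (x 3 - y 3) with ⟨c3, d3⟩ | ⟨c3, d3⟩ <;> linarith [k0.1, k0.2]
  · rw [hs]
    apply Finset.sup'_le
    intro p _
    have h0' := abs_sub_abs_le_abs_sub (x 0) (y 0)
    have l0 := le_abs_self (x 0 - y 0); have m0 := neg_le_abs (x 0 - y 0)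
    have l1 := le_abs_self (x 1 - y 1); have m1 := neg_le_abs (x 1 - y 1)
    have l2 := le_abs_self (x 2 - y 2); have m2 := neg_le_abs (x 2 - y 2)
    have l3 := le_abs_self (x 3 - y 3); have m3 := neg_le_abs (x 3 - y 3)
    have g0 : |psiMap x 0 - psiMap y 0| ≤
        |x 0 - y 0| + |x 1 - y 1| + |x 2 - y 2| + |x 3 - y 3| := by
      simp only [psiMap, Matrix.cons_val_zero]
      rw [abs_le]; constructor <;> linarith
    have g1 : |psiMap x 1 - psiMap y 1| ≤
        |x 0 - y 0| + |x 1 - y 1| + |x 2 - y 2| + |x 3 - y 3| := by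
      simp only [psiMap, Matrix.cons_val_one, Matrix.head_cons, Matrix.cons_val_zero]
      rw [abs_le]; constructor <;> linarith
    have g2 : |psiMap x 2 - psiMap y 2| ≤
        |x 0 - y 0| + |x 1 - y 1| + |x 2 - y 2| + |x 3 - y 3| := by
      simp only [psiMap, Matrix.cons_val_two, Matrix.tail_cons, Matrix.head_cons]
      rw [abs_le]; constructor <;> linarith
    have g3 : |psiMap x 3 - psiMap y 3| ≤
        |x 0 - y 0| + |x 1 - y 1| + |x 2 - y 2| + |x 3 - y 3| := by
      have : psiMap x 3 = 3/2 - x 0 - x 1 + x 2 - x 3 := rfl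
      have h' : psiMap y 3 = 3/2 - y 0 - y 1 + y 2 - y 3 := rfl
      rw [this, h', abs_le]; constructor <;> linarith
    fin_cases p
    exacts [g0, g1, g2, g3]


set_option maxHeartbeats 1000000 in
/-- The tight span of `K₄` minus an edge is a Manhattan square of side `1/2` with two
whiskers of length `1/2` attached at opposite corners, the whisker tips carrying the two
endpoints of the missing edge. -/
theorem tightSpan_K4_minus_edge :
    ∃ φ : (Fin 4 → ℝ) → Fin 4 → ℝ,
      Set.BijOn φ (tightSpan dK) squareWithWhiskers ∧
      (∀ f ∈ tightSpan dK, ∀ g ∈ tightSpan dK,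
        (∑ m, |φ f m - φ g m|) = supDist f g) ∧
      φ (dK 0) = ![1 / 2, 0, 0, 0] ∧ φ (dK 1) = ![0, 1 / 2, 0, 0] ∧
      φ (dK 2) = ![0, 0, 1 / 2, 0] ∧ φ (dK 3) = ![1 / 2, 1 / 2, 0, 1 / 2] := by
  refine ⟨phiMap, ⟨?_, ?_, ?_⟩, ?_, ?_, ?_, ?_, ?_⟩
  · intro f hf
    obtain ⟨x, hxS, rfl⟩ := exists_param hf
    rw [phi_psi hxS]; exact hxS
  · intro f hf g hg he
    obtain ⟨x, hxS, rfl⟩ := exists_param hf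
    obtain ⟨y, hyS, rfl⟩ := exists_param hg
    rw [phi_psi hxS, phi_psi hyS] at he
    rw [he]
  · intro x hx
    exact ⟨psiMap x, psi_mem_tightSpan hx, phi_psi hx⟩
  · intro f hf g hg
    obtain ⟨x, hxS, rfl⟩ := exists_param hf
    obtain ⟨y, hyS, rfl⟩ := exists_param hg
    rw [phi_psi hxS, phi_psi hyS]
    exact iso_eq hxS hyS
  · have h : dK 0 = ![0, 1, 1, 1] := by funext j; fin_cases j <;> simp [dK]
    rw [h]; funext m; fin_cases m <;> norm_num [phiMap, max_def, min_def, Matrix.cons_val_two, Matrix.tail_cons, Matrix.head_cons, Matrix.cons_val_three]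
  · have h : dK 1 = ![1, 0, 1, 1] := by funext j; fin_cases j <;> simp [dK]
    rw [h]; funext m; fin_cases m <;> norm_num [phiMap, max_def, min_def, Matrix.cons_val_two, Matrix.tail_cons, Matrix.head_cons, Matrix.cons_val_three]
  · have h : dK 2 = ![1, 1, 0, 2] := by funext j; fin_cases j <;> simp [dK]
    rw [h]; funext m; fin_cases m <;> norm_num [phiMap, max_def, min_def, Matrix.cons_val_two, Matrix.tail_cons, Matrix.head_cons, Matrix.cons_val_three]
  · have h : dK 3 = ![1, 1, 2, 0] := by funext j; fin_cases j <;> simp [dK]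
    rw [h]; funext m; fin_cases m <;> norm_num [phiMap, max_def, min_def, Matrix.cons_val_two, Matrix.tail_cons, Matrix.head_cons, Matrix.cons_val_three]
end

section
/- The tight span of the 5-cycle is five Manhattan squares of side 1/2 glued at a common vertex: for X = ZMod 5 with the graph metric d(i,j) = min(|i−j|, 5−|i−j|) of the cycle C₅, E(X) with the sup metric is isometric, by a bijection, to the set T₅ = {x ∈ S₅ : x_m ≤ 1/2 for all m} with the metric induced by the L¹ norm of ℝ⁵, with the isometry sending the extremal function d(i,·) to (e_i + e_{i+1})/2 (indices mod 5). -/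
/-- The graph metric of the 5-cycle on `ZMod 5`: `d i j = min (|i - j|, 5 - |i - j|)`. -/
noncomputable def d5 (i j : ZMod 5) : ℝ := min ((i - j).val : ℝ) ((j - i).val : ℝ)

namespace C5aux

lemma zmod5_cases (o : ZMod 5) : o = 0 ∨ o = 1 ∨ o = 2 ∨ o = 3 ∨ o = 4 := by revert o; decide

lemma exists_off (i q : ZMod 5) : ∃ o, q = i + o := ⟨q - i, by ring⟩

lemma d5_tab (a b : ZMod 5) : d5 a b = ((min (a-b).val (b-a).val : ℕ) : ℝ) :=
  (Nat.cast_min _ _).symm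

lemma d5_shift (i a b : ZMod 5) : d5 (i+a) (i+b) = d5 a b := by
  rw [d5, d5, add_sub_add_left_eq_sub, add_sub_add_left_eq_sub]

lemma sum5 (h : ZMod 5 → ℝ) : ∑ o, h o = h 0 + h 1 + h 2 + h 3 + h 4 := by
  rw [show (Finset.univ : Finset (ZMod 5)) = {0,1,2,3,4} by decide]
  rw [show ({0,1,2,3,4} : Finset (ZMod 5)) = insert 0 (insert 1 (insert 2 (insert 3 {4}))) from rfl]
  rw [Finset.sum_insert (by decide), Finset.sum_insert (by decide), Finset.sum_insert (by decide),
    Finset.sum_insert (by decide), Finset.sum_singleton]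
  ring

lemma sum5' (i : ZMod 5) (h : ZMod 5 → ℝ) :
    ∑ m, h m = h i + h (i+1) + h (i+2) + h (i+3) + h (i+4) := by
  rw [← Equiv.sum_comp (Equiv.addLeft i) h, sum5 (fun o => h ((Equiv.addLeft i) o))]
  simp

@[simp] lemma d5v_0_0 : d5 0 0 = 0 := by
  rw [d5_tab, (by decide : min ((0-0 : ZMod 5)).val ((0-0 : ZMod 5)).val = 0)]; norm_num
@[simp] lemma d5v_0_1 : d5 0 1 = 1 := by
  rw [d5_tab, (by decide : min ((0-1 : ZMod 5)).val ((1-0 : ZMod 5)).val = 1)]; norm_num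
@[simp] lemma d5v_0_2 : d5 0 2 = 2 := by
  rw [d5_tab, (by decide : min ((0-2 : ZMod 5)).val ((2-0 : ZMod 5)).val = 2)]; norm_num
@[simp] lemma d5v_0_3 : d5 0 3 = 2 := by
  rw [d5_tab, (by decide : min ((0-3 : ZMod 5)).val ((3-0 : ZMod 5)).val = 2)]; norm_num
@[simp] lemma d5v_0_4 : d5 0 4 = 1 := by
  rw [d5_tab, (by decide : min ((0-4 : ZMod 5)).val ((4-0 : ZMod 5)).val = 1)]; norm_num
@[simp] lemma d5v_1_0 : d5 1 0 = 1 := by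
  rw [d5_tab, (by decide : min ((1-0 : ZMod 5)).val ((0-1 : ZMod 5)).val = 1)]; norm_num
@[simp] lemma d5v_1_1 : d5 1 1 = 0 := by
  rw [d5_tab, (by decide : min ((1-1 : ZMod 5)).val ((1-1 : ZMod 5)).val = 0)]; norm_num
@[simp] lemma d5v_1_2 : d5 1 2 = 1 := by
  rw [d5_tab, (by decide : min ((1-2 : ZMod 5)).val ((2-1 : ZMod 5)).val = 1)]; norm_num
@[simp] lemma d5v_1_3 : d5 1 3 = 2 := by
  rw [d5_tab, (by decide : min ((1-3 : ZMod 5)).val ((3-1 : ZMod 5)).val = 2)]; norm_num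
@[simp] lemma d5v_1_4 : d5 1 4 = 2 := by
  rw [d5_tab, (by decide : min ((1-4 : ZMod 5)).val ((4-1 : ZMod 5)).val = 2)]; norm_num
@[simp] lemma d5v_2_0 : d5 2 0 = 2 := by
  rw [d5_tab, (by decide : min ((2-0 : ZMod 5)).val ((0-2 : ZMod 5)).val = 2)]; norm_num
@[simp] lemma d5v_2_1 : d5 2 1 = 1 := by
  rw [d5_tab, (by decide : min ((2-1 : ZMod 5)).val ((1-2 : ZMod 5)).val = 1)]; norm_num
@[simp] lemma d5v_2_2 : d5 2 2 = 0 := by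
  rw [d5_tab, (by decide : min ((2-2 : ZMod 5)).val ((2-2 : ZMod 5)).val = 0)]; norm_num
@[simp] lemma d5v_2_3 : d5 2 3 = 1 := by
  rw [d5_tab, (by decide : min ((2-3 : ZMod 5)).val ((3-2 : ZMod 5)).val = 1)]; norm_num
@[simp] lemma d5v_2_4 : d5 2 4 = 2 := by
  rw [d5_tab, (by decide : min ((2-4 : ZMod 5)).val ((4-2 : ZMod 5)).val = 2)]; norm_num
@[simp] lemma d5v_3_0 : d5 3 0 = 2 := by
  rw [d5_tab, (by decide : min ((3-0 : ZMod 5)).val ((0-3 : ZMod 5)).val = 2)]; norm_num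
@[simp] lemma d5v_3_1 : d5 3 1 = 2 := by
  rw [d5_tab, (by decide : min ((3-1 : ZMod 5)).val ((1-3 : ZMod 5)).val = 2)]; norm_num
@[simp] lemma d5v_3_2 : d5 3 2 = 1 := by
  rw [d5_tab, (by decide : min ((3-2 : ZMod 5)).val ((2-3 : ZMod 5)).val = 1)]; norm_num
@[simp] lemma d5v_3_3 : d5 3 3 = 0 := by
  rw [d5_tab, (by decide : min ((3-3 : ZMod 5)).val ((3-3 : ZMod 5)).val = 0)]; norm_num
@[simp] lemma d5v_3_4 : d5 3 4 = 1 := by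
  rw [d5_tab, (by decide : min ((3-4 : ZMod 5)).val ((4-3 : ZMod 5)).val = 1)]; norm_num
@[simp] lemma d5v_4_0 : d5 4 0 = 1 := by
  rw [d5_tab, (by decide : min ((4-0 : ZMod 5)).val ((0-4 : ZMod 5)).val = 1)]; norm_num
@[simp] lemma d5v_4_1 : d5 4 1 = 2 := by
  rw [d5_tab, (by decide : min ((4-1 : ZMod 5)).val ((1-4 : ZMod 5)).val = 2)]; norm_num
@[simp] lemma d5v_4_2 : d5 4 2 = 2 := by
  rw [d5_tab, (by decide : min ((4-2 : ZMod 5)).val ((2-4 : ZMod 5)).val = 2)]; norm_num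
@[simp] lemma d5v_4_3 : d5 4 3 = 1 := by
  rw [d5_tab, (by decide : min ((4-3 : ZMod 5)).val ((3-4 : ZMod 5)).val = 1)]; norm_num
@[simp] lemma d5v_4_4 : d5 4 4 = 0 := by
  rw [d5_tab, (by decide : min ((4-4 : ZMod 5)).val ((4-4 : ZMod 5)).val = 0)]; norm_num

noncomputable def sq (i : ZMod 5) (s t : ℝ) : ZMod 5 → ℝ := fun q =>
  if q = i then 1 - s - t else if q = i + 1 then 1 + s - t
  else if q = i + 4 then 1 - s + t else 1 + s + t

lemma sq_eval (i : ZMod 5) (s t : ℝ) (o : ZMod 5) :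
    sq i s t (i + o) =
      if o = 0 then 1 - s - t else if o = 1 then 1 + s - t
      else if o = 4 then 1 - s + t else 1 + s + t := by
  simp only [sq, add_eq_left, add_right_inj]

@[simp] lemma sq_e0 (i : ZMod 5) (s t : ℝ) : sq i s t (i+0) = 1 - s - t := by
  rw [sq_eval, if_pos rfl]
@[simp] lemma sq_ei (i : ZMod 5) (s t : ℝ) : sq i s t i = 1 - s - t := by
  simp [sq]
@[simp] lemma sq_e1 (i : ZMod 5) (s t : ℝ) : sq i s t (i+1) = 1 + s - t := by
  rw [sq_eval, if_neg (by decide), if_pos rfl]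
@[simp] lemma sq_e2 (i : ZMod 5) (s t : ℝ) : sq i s t (i+2) = 1 + s + t := by
  rw [sq_eval, if_neg (by decide), if_neg (by decide), if_neg (by decide)]
@[simp] lemma sq_e3 (i : ZMod 5) (s t : ℝ) : sq i s t (i+3) = 1 + s + t := by
  rw [sq_eval, if_neg (by decide), if_neg (by decide), if_neg (by decide)]
@[simp] lemma sq_e4 (i : ZMod 5) (s t : ℝ) : sq i s t (i+4) = 1 - s + t := by
  rw [sq_eval, if_neg (by decide), if_neg (by decide), if_pos rfl]

end C5aux

namespace C5aux
lemma sq_mem (i : ZMod 5) {s t : ℝ} (hs0 : 0 ≤ s) (hs : s ≤ 1/2) (ht0 : 0 ≤ t) (ht : t ≤ 1/2) :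
    sq i s t ∈ tightSpan d5 := by
  intro p
  obtain ⟨o, rfl⟩ := exists_off i p
  have hub : (Finset.univ.sup' Finset.univ_nonempty fun q => d5 (i+o) q - sq i s t q)
      ≤ sq i s t (i+o) := by
    apply Finset.sup'_le
    intro q _
    obtain ⟨o', rfl⟩ := exists_off i q
    rcases zmod5_cases o with rfl|rfl|rfl|rfl|rfl <;>
      rcases zmod5_cases o' with rfl|rfl|rfl|rfl|rfl <;>
      rw [d5_shift] <;> simp <;> linarith
  refine le_antisymm ?_ hub
  have key : ∀ w : ZMod 5, sq i s t (i+o) = d5 (i+o) (i+w) - sq i s t (i+w) →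
      sq i s t (i+o) ≤ Finset.univ.sup' Finset.univ_nonempty fun q => d5 (i+o) q - sq i s t q :=
    fun w hw => hw ▸ Finset.le_sup' (fun q => d5 (i+o) q - sq i s t q) (Finset.mem_univ (i+w))
  rcases zmod5_cases o with rfl|rfl|rfl|rfl|rfl
  · exact key 2 (by rw [d5_shift]; simp; ring)
  · exact key 4 (by rw [d5_shift]; simp; ring)
  · exact key 0 (by rw [d5_shift]; simp; ring)
  · exact key 0 (by rw [d5_shift]; simp; ring)
  · exact key 1 (by rw [d5_shift]; simp; ring)
end C5aux

namespace C5aux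

lemma d5_shiftR (i a : ZMod 5) : d5 (i + a) i = d5 a 0 := by
  rw [← d5_shift i a 0, add_zero]

lemma d5_shiftL (i b : ZMod 5) : d5 i (i + b) = d5 0 b := by
  rw [← d5_shift i 0 b, add_zero]

variable {f : ZMod 5 → ℝ}

lemma ts_ge (hf : f ∈ tightSpan d5) (p q : ZMod 5) : d5 p q - f q ≤ f p := by
  rw [hf p]
  exact Finset.le_sup' (fun q => d5 p q - f q) (Finset.mem_univ q)

lemma ts_ex (hf : f ∈ tightSpan d5) (p : ZMod 5) : ∃ q, f p = d5 p q - f q := by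
  obtain ⟨q, -, hq⟩ := Finset.exists_mem_eq_sup' Finset.univ_nonempty (fun q => d5 p q - f q)
  exact ⟨q, (hf p).trans hq⟩

lemma d5_self (p : ZMod 5) : d5 p p = 0 := by
  rw [d5, sub_self]
  norm_num

lemma ts_nonneg (hf : f ∈ tightSpan d5) (p : ZMod 5) : 0 ≤ f p := by
  have := ts_ge hf p p
  rw [d5_self] at this
  linarith

lemma d5_le (p q : ZMod 5) : d5 p q ≤ 2 := by
  obtain ⟨o, rfl⟩ := exists_off q p
  rw [d5_shiftR]
  rcases zmod5_cases o with rfl|rfl|rfl|rfl|rfl <;> simp <;> norm_num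

lemma ts_le_two (hf : f ∈ tightSpan d5) (p : ZMod 5) : f p ≤ 2 := by
  obtain ⟨q, hq⟩ := ts_ex hf p
  have := d5_le p q
  have := ts_nonneg hf q
  linarith

lemma min_tight (hf : f ∈ tightSpan d5) {i : ZMod 5} (hmin : ∀ q, f i ≤ f q) :
    f (i+2) = 2 - f i ∧ f (i+3) = 2 - f i := by
  have h1 : f i ≤ 1 := by
    obtain ⟨q, hq⟩ := ts_ex hf i
    have := d5_le i q
    have := hmin q
    linarith
  constructor
  · refine le_antisymm ?_ ?_
    · obtain ⟨q, hq⟩ := ts_ex hf (i+2)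
      obtain ⟨o, rfl⟩ := exists_off i q
      rcases zmod5_cases o with rfl|rfl|rfl|rfl|rfl <;> rw [d5_shift] at hq <;> simp at hq <;>
        [ linarith;
          linarith [ts_nonneg hf (i+1)];
          linarith;
          linarith [ts_nonneg hf (i+3)];
          linarith [hmin (i+4)] ]
    · have := ts_ge hf (i+2) i
      rw [d5_shiftR] at this
      simp at this
      linarith
  · refine le_antisymm ?_ ?_
    · obtain ⟨q, hq⟩ := ts_ex hf (i+3)
      obtain ⟨o, rfl⟩ := exists_off i q
      rcases zmod5_cases o with rfl|rfl|rfl|rfl|rfl <;> rw [d5_shift] at hq <;> simp at hq <;>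
        [ linarith;
          linarith [hmin (i+1)];
          linarith [ts_nonneg hf (i+2)];
          linarith;
          linarith [ts_nonneg hf (i+4)] ]
    · have := ts_ge hf (i+3) i
      rw [d5_shiftR] at this
      simp at this
      linarith

end C5aux

namespace C5aux

variable {f : ZMod 5 → ℝ}

lemma e14_lemma (hf : f ∈ tightSpan d5) {i : ZMod 5} (hmin : ∀ q, f i ≤ f q)
    (e2 : f (i+2) = 2 - f i) (e3 : f (i+3) = 2 - f i) : f (i+1) + f (i+4) = 2 := by
  have h1 : f i ≤ 1 := by
    obtain ⟨q, hq⟩ := ts_ex hf i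
    have := d5_le i q
    have := hmin q
    linarith
  have ge14 : 2 - f (i+4) ≤ f (i+1) := by
    have := ts_ge hf (i+1) (i+4)
    rw [d5_shift] at this
    simp at this
    linarith
  obtain ⟨q, hq⟩ := ts_ex hf (i+1)
  obtain ⟨o, rfl⟩ := exists_off i q
  rcases zmod5_cases o with rfl|rfl|rfl|rfl|rfl <;> rw [d5_shift] at hq <;> simp at hq
  · -- f (i+1) = 1 - f i ; show f (i+4) = 1 + f i
    have le4 : f (i+4) ≤ 1 + f i := by
      obtain ⟨q, hq'⟩ := ts_ex hf (i+4)
      obtain ⟨o, rfl⟩ := exists_off i q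
      rcases zmod5_cases o with rfl|rfl|rfl|rfl|rfl <;> rw [d5_shift] at hq' <;> simp at hq' <;>
        [ linarith [ts_nonneg hf i];
          linarith;
          linarith;
          linarith;
          linarith [ts_nonneg hf (i+4), ts_nonneg hf i] ]
    linarith
  · -- d5 1 1 = 0 : f (i+1) = 0, then f (i+4) = 2
    have : f (i+4) ≤ 2 := ts_le_two hf (i+4)
    linarith
  · -- d5 1 2 = 1 : f (i+1) = 1 - f (i+2) = f i - 1 : contradiction
    have := hmin (i+1)
    linarith
  · -- d5 1 3 = 2 : f (i+1) = 2 - f (i+3) = f i : min at i+1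
    have hmin1 : ∀ q, f (i+1) ≤ f q := fun q => by linarith [hmin q]
    have := (min_tight hf hmin1).2
    rw [show i+1+3 = i+4 by ring] at this
    linarith
  · linarith

lemma span_char (hf : f ∈ tightSpan d5) :
    ∃ i s t, 0 ≤ s ∧ s ≤ 1/2 ∧ 0 ≤ t ∧ t ≤ 1/2 ∧ f = sq i s t := by
  obtain ⟨i, -, hmin'⟩ := Finset.exists_min_image Finset.univ f Finset.univ_nonempty
  have hmin : ∀ q, f i ≤ f q := fun q => hmin' q (Finset.mem_univ q)
  obtain ⟨e2, e3⟩ := min_tight hf hmin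
  have e14 := e14_lemma hf hmin e2 e3
  have g1 : 1 - f i ≤ f (i+1) := by
    have := ts_ge hf (i+1) i
    rw [d5_shiftR] at this
    simp at this
    linarith
  have g4 : 1 - f i ≤ f (i+4) := by
    have := ts_ge hf (i+4) i
    rw [d5_shiftR] at this
    simp at this
    linarith
  refine ⟨i, (f (i+1) - f i)/2, (f (i+4) - f i)/2, by linarith [hmin (i+1)], by linarith,
    by linarith [hmin (i+4)], by linarith, ?_⟩
  funext q
  obtain ⟨o, rfl⟩ := exists_off i q
  rcases zmod5_cases o with rfl|rfl|rfl|rfl|rfl <;> simp <;> linarith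

end C5aux

namespace C5aux

noncomputable def ind (i : ZMod 5) (s t : ℝ) : ZMod 5 → ℝ := fun m =>
  if m = i then s else if m = i + 1 then t else 0

lemma ind_eval (i : ZMod 5) (s t : ℝ) (a : ZMod 5) :
    ind i s t (i + a) = if a = 0 then s else if a = 1 then t else 0 := by
  simp only [ind, add_eq_left, add_assoc, add_right_inj]

lemma ind_eval' (i b : ZMod 5) (s t : ℝ) (a : ZMod 5) :
    ind (i + b) s t (i + a) = if a = b then s else if a = b + 1 then t else 0 := by
  simp only [ind, add_assoc, add_right_inj]

lemma sq_eval' (i b : ZMod 5) (s t : ℝ) (a : ZMod 5) :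
    sq (i + b) s t (i + a) =
      if a = b then 1 - s - t else if a = b + 1 then 1 + s - t
      else if a = b + 4 then 1 - s + t else 1 + s + t := by
  simp only [sq, add_assoc, add_right_inj]

example (i : ZMod 5) (s t : ℝ) : ind (i+1) s t (i+2) = t := by
  rw [ind_eval']
  simp (config := { decide := true })

example (i : ZMod 5) (s t : ℝ) : ind (i+4) s t (i+0) = t := by
  rw [ind_eval']
  simp (config := { decide := true })

noncomputable def phi (f : ZMod 5 → ℝ) : ZMod 5 → ℝ := fun m => max 0 ((f (m+1) - f m)/2)

lemma phi_sq (i : ZMod 5) {s t : ℝ} (hs0 : 0 ≤ s) (ht0 : 0 ≤ t) :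
    phi (sq i s t) = ind i s t := by
  funext m
  obtain ⟨o, rfl⟩ := exists_off i m
  rw [phi, ind_eval, add_assoc]
  rcases zmod5_cases o with rfl|rfl|rfl|rfl|rfl
  · rw [if_pos rfl, show (0:ZMod 5)+1 = 1 from by decide, sq_e1, sq_e0,
      max_eq_right (by linarith)]; ring
  · rw [if_neg (by decide), if_pos rfl, show (1:ZMod 5)+1 = 2 from by decide, sq_e2, sq_e1,
      max_eq_right (by linarith)]; ring
  · rw [if_neg (by decide), if_neg (by decide), show (2:ZMod 5)+1 = 3 from by decide, sq_e3, sq_e2,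
      max_eq_left (by linarith)]
  · rw [if_neg (by decide), if_neg (by decide), show (3:ZMod 5)+1 = 4 from by decide, sq_e4, sq_e3,
      max_eq_left (by linarith)]
  · rw [if_neg (by decide), if_neg (by decide), show (4:ZMod 5)+1 = 0 from by decide, add_zero,
      sq_ei, sq_e4, max_eq_left (by linarith)]

end C5aux

namespace C5aux

lemma sum5'' (i : ZMod 5) (h : ZMod 5 → ℝ) :
    ∑ m, h m = h (i+0) + h (i+1) + h (i+2) + h (i+3) + h (i+4) := by
  rw [sum5' i, add_zero]

lemma case2 (i : ZMod 5) {s t s' t' : ℝ} (hs0 : 0 ≤ s) (hs : s ≤ 1/2) (ht0 : 0 ≤ t)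
    (ht : t ≤ 1/2) (hs0' : 0 ≤ s') (hs' : s' ≤ 1/2) (ht0' : 0 ≤ t') (ht' : t' ≤ 1/2) :
    (∑ m, |ind i s t m - ind (i+2) s' t' m|) = supDist (sq i s t) (sq (i+2) s' t') := by
  have hsum : (∑ m, |ind i s t m - ind (i+2) s' t' m|) = s + t + s' + t' := by
    rw [sum5'' i (fun m => |ind i s t m - ind (i+2) s' t' m|)]
    simp only [ind_eval, ind_eval']
    simp (config := { decide := true }) only [if_true, if_false, sub_zero, zero_sub, abs_neg, abs_zero, sub_self, add_zero, zero_add]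
    rw [abs_of_nonneg hs0, abs_of_nonneg ht0, abs_of_nonneg hs0', abs_of_nonneg ht0']
  have hsup : supDist (sq i s t) (sq (i+2) s' t') = s + t + s' + t' := by
    unfold supDist
    apply le_antisymm
    · apply Finset.sup'_le
      intro p _
      obtain ⟨o, rfl⟩ := exists_off i p
      rw [sq_eval, sq_eval']
      rcases zmod5_cases o with rfl|rfl|rfl|rfl|rfl <;>
        simp (config := { decide := true }) only [if_true, if_false, sub_zero, zero_sub, abs_neg, abs_zero, sub_self, add_zero, zero_add] <;>
        (rw [abs_le]; constructor <;> linarith)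
    · refine le_trans ?_ (Finset.le_sup' _ (Finset.mem_univ (i+0)))
      rw [sq_eval, sq_eval']
      simp (config := { decide := true }) only [if_true, if_false, sub_zero, zero_sub, abs_neg, abs_zero, sub_self, add_zero, zero_add]
      rw [abs_of_nonpos (by linarith)]
      ring_nf
      linarith
  rw [hsum, hsup]

end C5aux

namespace C5aux

lemma case0 (i : ZMod 5) {s t s' t' : ℝ} (hs0 : 0 ≤ s) (hs : s ≤ 1/2) (ht0 : 0 ≤ t)
    (ht : t ≤ 1/2) (hs0' : 0 ≤ s') (hs' : s' ≤ 1/2) (ht0' : 0 ≤ t') (ht' : t' ≤ 1/2) :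
    (∑ m, |ind i s t m - ind i s' t' m|) = supDist (sq i s t) (sq i s' t') := by
  have hsum : (∑ m, |ind i s t m - ind i s' t' m|) = |s - s'| + |t - t'| := by
    rw [sum5'' i (fun m => |ind i s t m - ind i s' t' m|)]
    simp only [ind_eval]
    simp (config := { decide := true }) only [if_true, if_false, sub_zero, zero_sub, abs_neg,
      abs_zero, sub_self, add_zero, zero_add]
  have hsup : supDist (sq i s t) (sq i s' t') = |s - s'| + |t - t'| := by
    unfold supDist
    apply le_antisymm
    · apply Finset.sup'_le
      intro p _
      obtain ⟨o, rfl⟩ := exists_off i p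
      rw [sq_eval, sq_eval]
      rcases zmod5_cases o with rfl|rfl|rfl|rfl|rfl <;>
        simp (config := { decide := true }) only [if_true, if_false] <;>
        (rw [abs_le]; constructor <;>
          rcases abs_cases (s - s') with ⟨h1,_⟩|⟨h1,_⟩ <;>
          rcases abs_cases (t - t') with ⟨h2,_⟩|⟨h2,_⟩ <;> linarith)
    · rcases le_total s s' with hss|hss <;> rcases le_total t t' with htt|htt
      · refine le_trans ?_ (Finset.le_sup' _ (Finset.mem_univ (i+0)))
        rw [sq_eval, sq_eval]
        simp (config := { decide := true }) only [if_true, if_false]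
        refine le_abs.mpr (Or.inl ?_)
        rw [abs_of_nonpos (by linarith), abs_of_nonpos (by linarith)]
        linarith
      · refine le_trans ?_ (Finset.le_sup' _ (Finset.mem_univ (i+1)))
        rw [sq_eval, sq_eval]
        simp (config := { decide := true }) only [if_true, if_false]
        refine le_abs.mpr (Or.inr ?_)
        rw [abs_of_nonpos (by linarith), abs_of_nonneg (by linarith)]
        linarith
      · refine le_trans ?_ (Finset.le_sup' _ (Finset.mem_univ (i+1)))
        rw [sq_eval, sq_eval]
        simp (config := { decide := true }) only [if_true, if_false]
        refine le_abs.mpr (Or.inl ?_)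
        rw [abs_of_nonneg (by linarith), abs_of_nonpos (by linarith)]
        linarith
      · refine le_trans ?_ (Finset.le_sup' _ (Finset.mem_univ (i+0)))
        rw [sq_eval, sq_eval]
        simp (config := { decide := true }) only [if_true, if_false]
        refine le_abs.mpr (Or.inr ?_)
        rw [abs_of_nonneg (by linarith), abs_of_nonneg (by linarith)]
        linarith
  rw [hsum, hsup]

lemma case1 (i : ZMod 5) {s t s' t' : ℝ} (hs0 : 0 ≤ s) (hs : s ≤ 1/2) (ht0 : 0 ≤ t)
    (ht : t ≤ 1/2) (hs0' : 0 ≤ s') (hs' : s' ≤ 1/2) (ht0' : 0 ≤ t') (ht' : t' ≤ 1/2) :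
    (∑ m, |ind i s t m - ind (i+1) s' t' m|) = supDist (sq i s t) (sq (i+1) s' t') := by
  have hsum : (∑ m, |ind i s t m - ind (i+1) s' t' m|) = s + |t - s'| + t' := by
    rw [sum5'' i (fun m => |ind i s t m - ind (i+1) s' t' m|)]
    simp only [ind_eval, ind_eval']
    simp (config := { decide := true }) only [if_true, if_false, sub_zero, zero_sub, abs_neg,
      abs_zero, sub_self, add_zero, zero_add]
    rw [abs_of_nonneg hs0, abs_of_nonneg ht0']
  have hsup : supDist (sq i s t) (sq (i+1) s' t') = s + |t - s'| + t' := by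
    unfold supDist
    apply le_antisymm
    · apply Finset.sup'_le
      intro p _
      obtain ⟨o, rfl⟩ := exists_off i p
      rw [sq_eval, sq_eval']
      rcases zmod5_cases o with rfl|rfl|rfl|rfl|rfl <;>
        simp (config := { decide := true }) only [if_true, if_false] <;>
        (rw [abs_le]; constructor <;>
          rcases abs_cases (t - s') with ⟨h1,_⟩|⟨h1,_⟩ <;> linarith)
    · rcases le_total t s' with h|h
      · refine le_trans ?_ (Finset.le_sup' _ (Finset.mem_univ (i+1)))
        rw [sq_eval, sq_eval']
        simp (config := { decide := true }) only [if_true, if_false]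
        refine le_abs.mpr (Or.inl ?_)
        rw [abs_of_nonpos (by linarith)]
        linarith
      · refine le_trans ?_ (Finset.le_sup' _ (Finset.mem_univ (i+2)))
        rw [sq_eval, sq_eval']
        simp (config := { decide := true }) only [if_true, if_false]
        refine le_abs.mpr (Or.inl ?_)
        rw [abs_of_nonneg (by linarith)]
        linarith
  rw [hsum, hsup]

lemma case3 (i : ZMod 5) {s t s' t' : ℝ} (hs0 : 0 ≤ s) (hs : s ≤ 1/2) (ht0 : 0 ≤ t)
    (ht : t ≤ 1/2) (hs0' : 0 ≤ s') (hs' : s' ≤ 1/2) (ht0' : 0 ≤ t') (ht' : t' ≤ 1/2) :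
    (∑ m, |ind i s t m - ind (i+3) s' t' m|) = supDist (sq i s t) (sq (i+3) s' t') := by
  have hsum : (∑ m, |ind i s t m - ind (i+3) s' t' m|) = s + t + s' + t' := by
    rw [sum5'' i (fun m => |ind i s t m - ind (i+3) s' t' m|)]
    simp only [ind_eval, ind_eval']
    simp (config := { decide := true }) only [if_true, if_false, sub_zero, zero_sub, abs_neg,
      abs_zero, sub_self, add_zero, zero_add]
    rw [abs_of_nonneg hs0, abs_of_nonneg ht0, abs_of_nonneg hs0', abs_of_nonneg ht0']
  have hsup : supDist (sq i s t) (sq (i+3) s' t') = s + t + s' + t' := by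
    unfold supDist
    apply le_antisymm
    · apply Finset.sup'_le
      intro p _
      obtain ⟨o, rfl⟩ := exists_off i p
      rw [sq_eval, sq_eval']
      rcases zmod5_cases o with rfl|rfl|rfl|rfl|rfl <;>
        simp (config := { decide := true }) only [if_true, if_false] <;>
        (rw [abs_le]; constructor <;> linarith)
    · refine le_trans ?_ (Finset.le_sup' _ (Finset.mem_univ (i+0)))
      rw [sq_eval, sq_eval']
      simp (config := { decide := true }) only [if_true, if_false]
      refine le_abs.mpr (Or.inr ?_)
      linarith
  rw [hsum, hsup]

lemma case4 (i : ZMod 5) {s t s' t' : ℝ} (hs0 : 0 ≤ s) (hs : s ≤ 1/2) (ht0 : 0 ≤ t)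
    (ht : t ≤ 1/2) (hs0' : 0 ≤ s') (hs' : s' ≤ 1/2) (ht0' : 0 ≤ t') (ht' : t' ≤ 1/2) :
    (∑ m, |ind i s t m - ind (i+4) s' t' m|) = supDist (sq i s t) (sq (i+4) s' t') := by
  have hsum : (∑ m, |ind i s t m - ind (i+4) s' t' m|) = |s - t'| + t + s' := by
    rw [sum5'' i (fun m => |ind i s t m - ind (i+4) s' t' m|)]
    simp only [ind_eval, ind_eval']
    simp (config := { decide := true }) only [if_true, if_false, sub_zero, zero_sub, abs_neg,
      abs_zero, sub_self, add_zero, zero_add]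
    rw [abs_of_nonneg ht0, abs_of_nonneg hs0']
  have hsup : supDist (sq i s t) (sq (i+4) s' t') = |s - t'| + t + s' := by
    unfold supDist
    apply le_antisymm
    · apply Finset.sup'_le
      intro p _
      obtain ⟨o, rfl⟩ := exists_off i p
      rw [sq_eval, sq_eval']
      rcases zmod5_cases o with rfl|rfl|rfl|rfl|rfl <;>
        simp (config := { decide := true }) only [if_true, if_false] <;>
        (rw [abs_le]; constructor <;>
          rcases abs_cases (s - t') with ⟨h1,_⟩|⟨h1,_⟩ <;> linarith)
    · rcases le_total t' s with h|h
      · refine le_trans ?_ (Finset.le_sup' _ (Finset.mem_univ (i+3)))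
        rw [sq_eval, sq_eval']
        simp (config := { decide := true }) only [if_true, if_false]
        refine le_abs.mpr (Or.inl ?_)
        rw [abs_of_nonneg (by linarith)]
        linarith
      · refine le_trans ?_ (Finset.le_sup' _ (Finset.mem_univ (i+4)))
        rw [sq_eval, sq_eval']
        simp (config := { decide := true }) only [if_true, if_false]
        refine le_abs.mpr (Or.inl ?_)
        rw [abs_of_nonpos (by linarith)]
        linarith
  rw [hsum, hsup]

end C5aux

namespace C5aux

lemma d5_sq (i : ZMod 5) : d5 i = sq i (1/2) (1/2) := by
  funext q
  obtain ⟨o, rfl⟩ := exists_off i q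
  rw [d5_shiftL]
  rcases zmod5_cases o with rfl|rfl|rfl|rfl|rfl <;> simp <;> norm_num

lemma iso : ∀ f ∈ tightSpan d5, ∀ g ∈ tightSpan d5,
    (∑ m, |phi f m - phi g m|) = supDist f g := by
  intro f hf g hg
  obtain ⟨i, s, t, hs0, hs, ht0, ht, rfl⟩ := span_char hf
  obtain ⟨j, s', t', hs0', hs', ht0', ht', rfl⟩ := span_char hg
  rw [phi_sq i hs0 ht0, phi_sq j hs0' ht0']
  obtain ⟨k, rfl⟩ := exists_off i j
  rcases zmod5_cases k with rfl|rfl|rfl|rfl|rfl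
  · simp only [add_zero]
    exact case0 i hs0 hs ht0 ht hs0' hs' ht0' ht'
  · exact case1 i hs0 hs ht0 ht hs0' hs' ht0' ht'
  · exact case2 i hs0 hs ht0 ht hs0' hs' ht0' ht'
  · exact case3 i hs0 hs ht0 ht hs0' hs' ht0' ht'
  · exact case4 i hs0 hs ht0 ht hs0' hs' ht0' ht'

lemma supDist_eq_zero {f g : ZMod 5 → ℝ} (h : supDist f g = 0) : f = g := by
  funext p
  have hp := Finset.le_sup' (fun p => |f p - g p|) (Finset.mem_univ p)
  unfold supDist at h
  rw [h] at hp
  have := abs_nonneg (f p - g p)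
  have : |f p - g p| = 0 := le_antisymm hp this
  exact sub_eq_zero.mp (abs_eq_zero.mp this)

end C5aux


open C5aux


/-- The tight span of the 5-cycle consists of five Manhattan squares of side `1/2` glued
at a common vertex: it is isometric, by a bijection, to
`T₅ = {x ∈ S₅ : ∀ m, x m ≤ 1/2}` with the `L¹` metric of `ℝ⁵`, the extremal function of
vertex `i` going to `(e i + e (i+1)) / 2`. -/
theorem tightSpan_fiveCycle :
    ∃ φ : (ZMod 5 → ℝ) → ZMod 5 → ℝ,
      Set.BijOn φ (tightSpan d5) {x | x ∈ rectCone 5 ∧ ∀ m, x m ≤ 1 / 2} ∧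
      (∀ f ∈ tightSpan d5, ∀ g ∈ tightSpan d5,
        (∑ m, |φ f m - φ g m|) = supDist f g) ∧
      (∀ i : ZMod 5, φ (d5 i) = fun m => if m = i ∨ m = i + 1 then 1 / 2 else 0) := by
  refine ⟨phi, ⟨?_, ?_, ?_⟩, iso, ?_⟩
  · -- MapsTo
    intro f hf
    obtain ⟨i, s, t, hs0, hs, ht0, ht, rfl⟩ := span_char hf
    rw [phi_sq i hs0 ht0]
    constructor
    · apply Set.mem_iUnion.2
      refine ⟨i, ?_, ?_⟩
      · intro m
        simp only [ind]
        split_ifs <;> linarith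
      · intro m hm1 hm2
        simp only [ind, if_neg hm1, if_neg hm2]
    · intro m
      simp only [ind]
      split_ifs <;> linarith
  · -- InjOn
    intro f hf g hg h
    have hiso := iso f hf g hg
    rw [h] at hiso
    simp only [sub_self, abs_zero, Finset.sum_const_zero] at hiso
    exact supDist_eq_zero hiso.symm
  · -- SurjOn
    intro x hx
    obtain ⟨hxc, hxb⟩ := hx
    obtain ⟨i, hx0, hxz⟩ := Set.mem_iUnion.1 hxc
    refine ⟨sq i (x i) (x (i+1)),
      sq_mem i (hx0 i) (hxb i) (hx0 (i+1)) (hxb (i+1)), ?_⟩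
    rw [phi_sq i (hx0 i) (hx0 (i+1))]
    funext m
    simp only [ind]
    split_ifs with h1 h2
    · rw [h1]
    · rw [h2]
    · exact (hxz m h1 h2).symm
  · -- extremal functions
    intro i
    rw [d5_sq i, phi_sq i (by norm_num) (by norm_num)]
    funext m
    simp only [ind]
    by_cases h1 : m = i
    · simp [h1]
    · by_cases h2 : m = i + 1 <;> simp [h1, h2]
end

section
/- The tight span of the 2×3 grid graph (the squaregraph consisting of two quadrilaterals sharing an edge) is a 1×2 Manhattan rectangle: for X = {0,1} × {0,1,2} with the metric d((i,j),(i',j')) = |i−i'| + |j−j'| (which is the graph metric of the 2×3 grid graph), E(X) with the sup metric is isometric, by a bijection, to the rectangle [0,1] × [0,2] ⊆ ℝ² with the L¹ metric, with the isometry sending each extremal function d((i,j),·) to the point (i,j) ∈ ℝ². -/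
/-- The graph metric of the `2 × 3` grid graph on `{0,1} × {0,1,2}`:
`d (i,j) (i',j') = |i - i'| + |j - j'|`. -/
noncomputable def dGrid : Fin 2 × Fin 3 → Fin 2 × Fin 3 → ℝ := fun p q =>
  |(p.1 : ℝ) - (q.1 : ℝ)| + |(p.2 : ℝ) - (q.2 : ℝ)|

namespace TSGrid

noncomputable def F (x y : ℝ) : Fin 2 × Fin 3 → ℝ := fun p => |x - (p.1 : ℝ)| + |y - (p.2 : ℝ)|

noncomputable def phi (f : Fin 2 × Fin 3 → ℝ) : ℝ × ℝ :=
  ((f (0,0) - f (1,0) + 1)/2, (f (0,0) - f (0,2) + 2)/2)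

lemma mem_iff {f : Fin 2 × Fin 3 → ℝ} : f ∈ tightSpan dGrid ↔
    ∀ p, (∀ q, dGrid p q - f q ≤ f p) ∧ ∃ q, f p = dGrid p q - f q := by
  constructor
  · intro hf p
    refine ⟨fun q => ?_, ?_⟩
    · rw [hf p]; exact Finset.le_sup' (fun q => dGrid p q - f q) (Finset.mem_univ q)
    · obtain ⟨q, _, hq⟩ := Finset.exists_mem_eq_sup' Finset.univ_nonempty
        fun q => dGrid p q - f q
      exact ⟨q, (hf p).trans hq⟩
  · intro h p
    apply le_antisymm
    · obtain ⟨q, hq⟩ := (h p).2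
      exact hq.le.trans (Finset.le_sup' (fun q => dGrid p q - f q) (Finset.mem_univ q))
    · exact Finset.sup'_le _ _ fun q _ => (h p).1 q

lemma dGrid_tri (p r q : Fin 2 × Fin 3) : dGrid p q ≤ dGrid p r + dGrid r q := by
  have h1 := abs_sub_le ((p.1 : ℝ)) ((r.1 : ℝ)) ((q.1 : ℝ))
  have h2 := abs_sub_le ((p.2 : ℝ)) ((r.2 : ℝ)) ((q.2 : ℝ))
  simp only [dGrid]; linarith

lemma opp1 (q : Fin 2 × Fin 3) : dGrid (0,0) q + dGrid (1,2) q = 3 := by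
  obtain ⟨i, j⟩ := q; fin_cases i <;> fin_cases j <;> norm_num [dGrid]

lemma opp2 (q : Fin 2 × Fin 3) : dGrid (1,0) q + dGrid (0,2) q = 3 := by
  obtain ⟨i, j⟩ := q; fin_cases i <;> fin_cases j <;> norm_num [dGrid]


lemma fk20 (h : 0 < 2) : (⟨0, h⟩ : Fin 2) = 0 := rfl
lemma fk21 (h : 1 < 2) : (⟨1, h⟩ : Fin 2) = 1 := rfl
lemma fk30 (h : 0 < 3) : (⟨0, h⟩ : Fin 3) = 0 := rfl
lemma fk31 (h : 1 < 3) : (⟨1, h⟩ : Fin 3) = 1 := rfl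
lemma fk32 (h : 2 < 3) : (⟨2, h⟩ : Fin 3) = 2 := rfl

lemma Fe00 (x y : ℝ) : F x y (0,0) = |x| + |y| := by norm_num [F]
lemma Fe01 (x y : ℝ) : F x y (0,1) = |x| + |y-1| := by norm_num [F]
lemma Fe02 (x y : ℝ) : F x y (0,2) = |x| + |y-2| := by norm_num [F]
lemma Fe10 (x y : ℝ) : F x y (1,0) = |x-1| + |y| := by norm_num [F]
lemma Fe11 (x y : ℝ) : F x y (1,1) = |x-1| + |y-1| := by norm_num [F]
lemma Fe12 (x y : ℝ) : F x y (1,2) = |x-1| + |y-2| := by norm_num [F]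

lemma forward {f : Fin 2 × Fin 3 → ℝ} (hf : f ∈ tightSpan dGrid) :
    ∃ x ∈ Set.Icc (0:ℝ) 1, ∃ y ∈ Set.Icc (0:ℝ) 2, f = F x y := by
  rw [mem_iff] at hf
  have lip : ∀ p r, f p ≤ f r + dGrid p r := by
    intro p r
    obtain ⟨q, hq⟩ := (hf p).2
    have h1 := (hf r).1 q
    have h2 := dGrid_tri p r q
    linarith
  have hop1 : f (0,0) + f (1,2) = 3 := by
    have h1 : dGrid (0,0) (1,2) - f (1,2) ≤ f (0,0) := (hf (0,0)).1 (1,2)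
    have hd : dGrid (0,0) (1,2) = 3 := by norm_num [dGrid]
    obtain ⟨q, hq⟩ := (hf (0,0)).2
    have h2 := lip (1,2) q
    have h3 := opp1 q
    rw [hd] at h1
    linarith
  have hop2 : f (1,0) + f (0,2) = 3 := by
    have h1 : dGrid (1,0) (0,2) - f (0,2) ≤ f (1,0) := (hf (1,0)).1 (0,2)
    have hd : dGrid (1,0) (0,2) = 3 := by norm_num [dGrid]
    obtain ⟨q, hq⟩ := (hf (1,0)).2
    have h2 := lip (0,2) q
    have h3 := opp2 q
    rw [hd] at h1
    linarith
  have l1 : f (1,0) ≤ f (0,0) + 1 := by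
    have h := lip (1,0) (0,0)
    have hd : dGrid (1,0) (0,0) = 1 := by norm_num [dGrid]
    linarith [hd ▸ h]
  have l2 : f (0,0) ≤ f (1,0) + 1 := by
    have h := lip (0,0) (1,0)
    have hd : dGrid (0,0) (1,0) = 1 := by norm_num [dGrid]
    linarith [hd ▸ h]
  have l3 : f (0,2) ≤ f (0,0) + 2 := by
    have h := lip (0,2) (0,0)
    have hd : dGrid (0,2) (0,0) = 2 := by norm_num [dGrid]
    linarith [hd ▸ h]
  have l4 : f (0,0) ≤ f (0,2) + 2 := by
    have h := lip (0,0) (0,2)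
    have hd : dGrid (0,0) (0,2) = 2 := by norm_num [dGrid]
    linarith [hd ▸ h]
  have lb1 : f (0,0) ≤ f (0,1) + 1 := by
    have h := lip (0,0) (0,1)
    have hd : dGrid (0,0) (0,1) = 1 := by norm_num [dGrid]
    linarith [hd ▸ h]
  have lb2 : f (0,2) ≤ f (0,1) + 1 := by
    have h := lip (0,2) (0,1)
    have hd : dGrid (0,2) (0,1) = 1 := by norm_num [dGrid]
    linarith [hd ▸ h]
  have lB1 : f (1,0) ≤ f (1,1) + 1 := by
    have h := lip (1,0) (1,1)
    have hd : dGrid (1,0) (1,1) = 1 := by norm_num [dGrid]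
    linarith [hd ▸ h]
  have lB2 : f (1,2) ≤ f (1,1) + 1 := by
    have h := lip (1,2) (1,1)
    have hd : dGrid (1,2) (1,1) = 1 := by norm_num [dGrid]
    linarith [hd ▸ h]
  have hbu : f (0,1) ≤ max (f (0,0)) (f (0,2)) - 1 := by
    obtain ⟨⟨i,j⟩, hq⟩ := (hf (0,1)).2
    have h0 := (hf (0,0)).1 (i,j)
    have h2 := (hf (0,2)).1 (i,j)
    fin_cases i <;> fin_cases j <;>
      norm_num [dGrid, fk20, fk21, fk30, fk31, fk32, -Prod.mk_zero_zero, -Prod.mk_one_one] at hq h0 h2 <;>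
      linarith [le_max_left (f (0,0)) (f (0,2)), le_max_right (f (0,0)) (f (0,2))]
  have hBu : f (1,1) ≤ max (f (1,0)) (f (1,2)) - 1 := by
    obtain ⟨⟨i,j⟩, hq⟩ := (hf (1,1)).2
    have h0 := (hf (1,0)).1 (i,j)
    have h2 := (hf (1,2)).1 (i,j)
    fin_cases i <;> fin_cases j <;>
      norm_num [dGrid, fk20, fk21, fk30, fk31, fk32, -Prod.mk_zero_zero, -Prod.mk_one_one] at hq h0 h2 <;>
      linarith [le_max_left (f (1,0)) (f (1,2)), le_max_right (f (1,0)) (f (1,2))]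
  refine ⟨(f (0,0) - f (1,0) + 1)/2, ⟨by linarith, by linarith⟩,
    (f (0,0) - f (0,2) + 2)/2, ⟨by linarith, by linarith⟩, ?_⟩
  rcases le_total (f (0,0)) (f (0,2)) with hac | hac
  · have hbe : f (0,1) = f (0,2) - 1 := by
      rw [max_eq_right hac] at hbu; linarith
    have hACle : f (1,0) ≤ f (1,2) := by linarith
    have hBe : f (1,1) = f (1,2) - 1 := by
      rw [max_eq_right hACle] at hBu; linarith
    funext p; fin_cases p
    · simp only [fk20, fk21, fk30, fk31, fk32]
      rw [Fe00, abs_of_nonneg (by linarith), abs_of_nonneg (by linarith)]; linarith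
    · simp only [fk20, fk21, fk30, fk31, fk32]
      rw [Fe01, abs_of_nonneg (by linarith), abs_of_nonpos (by linarith)]; linarith
    · simp only [fk20, fk21, fk30, fk31, fk32]
      rw [Fe02, abs_of_nonneg (by linarith), abs_of_nonpos (by linarith)]; linarith
    · simp only [fk20, fk21, fk30, fk31, fk32]
      rw [Fe10, abs_of_nonpos (by linarith), abs_of_nonneg (by linarith)]; linarith
    · simp only [fk20, fk21, fk30, fk31, fk32]
      rw [Fe11, abs_of_nonpos (by linarith), abs_of_nonpos (by linarith)]; linarith
    · simp only [fk20, fk21, fk30, fk31, fk32]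
      rw [Fe12, abs_of_nonpos (by linarith), abs_of_nonpos (by linarith)]; linarith
  · have hbe : f (0,1) = f (0,0) - 1 := by
      rw [max_eq_left hac] at hbu; linarith
    have hACle : f (1,2) ≤ f (1,0) := by linarith
    have hBe : f (1,1) = f (1,0) - 1 := by
      rw [max_eq_left hACle] at hBu; linarith
    funext p; fin_cases p
    · simp only [fk20, fk21, fk30, fk31, fk32]
      rw [Fe00, abs_of_nonneg (by linarith), abs_of_nonneg (by linarith)]; linarith
    · simp only [fk20, fk21, fk30, fk31, fk32]
      rw [Fe01, abs_of_nonneg (by linarith), abs_of_nonneg (by linarith)]; linarith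
    · simp only [fk20, fk21, fk30, fk31, fk32]
      rw [Fe02, abs_of_nonneg (by linarith), abs_of_nonpos (by linarith)]; linarith
    · simp only [fk20, fk21, fk30, fk31, fk32]
      rw [Fe10, abs_of_nonpos (by linarith), abs_of_nonneg (by linarith)]; linarith
    · simp only [fk20, fk21, fk30, fk31, fk32]
      rw [Fe11, abs_of_nonpos (by linarith), abs_of_nonneg (by linarith)]; linarith
    · simp only [fk20, fk21, fk30, fk31, fk32]
      rw [Fe12, abs_of_nonpos (by linarith), abs_of_nonpos (by linarith)]; linarith


lemma F_mem {x y : ℝ} (hx : x ∈ Set.Icc (0:ℝ) 1) (hy : y ∈ Set.Icc (0:ℝ) 2) :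
    F x y ∈ tightSpan dGrid := by
  obtain ⟨hx0, hx1⟩ := hx
  obtain ⟨hy0, hy2⟩ := hy
  have ex : |x| = x := abs_of_nonneg hx0
  have ex1 : |x - 1| = -(x - 1) := abs_of_nonpos (by linarith)
  have ey : |y| = y := abs_of_nonneg hy0
  have ey2 : |y - 2| = -(y - 2) := abs_of_nonpos (by linarith)
  rw [mem_iff]
  intro p
  constructor
  · intro q
    have h1 := abs_sub_le ((p.1 : ℝ)) x ((q.1 : ℝ))
    have h2 := abs_sub_le ((p.2 : ℝ)) y ((q.2 : ℝ))
    have h3 : |(p.1 : ℝ) - x| = |x - (p.1 : ℝ)| := abs_sub_comm _ _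
    have h4 : |(p.2 : ℝ) - y| = |y - (p.2 : ℝ)| := abs_sub_comm _ _
    simp only [F, dGrid]
    linarith [h3 ▸ h1, h4 ▸ h2]
  · obtain ⟨i, j⟩ := p
    fin_cases i <;> fin_cases j
    · exact ⟨(1,2), by simp only [fk20, fk21, fk30, fk31, fk32]; rw [Fe00, Fe12, ex, ey, ex1, ey2]; norm_num [dGrid]; ring⟩
    · rcases le_total y 1 with h | h
      · exact ⟨(1,0), by
          simp only [fk20, fk21, fk30, fk31, fk32]
          rw [Fe01, Fe10, ex, ey, ex1, abs_of_nonpos (by linarith : y - 1 ≤ 0)]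
          norm_num [dGrid]; ring⟩
      · exact ⟨(1,2), by
          simp only [fk20, fk21, fk30, fk31, fk32]
          rw [Fe01, Fe12, ex, ex1, ey2, abs_of_nonneg (by linarith : (0:ℝ) ≤ y - 1)]
          norm_num [dGrid]; ring⟩
    · exact ⟨(1,0), by simp only [fk20, fk21, fk30, fk31, fk32]; rw [Fe02, Fe10, ex, ey, ex1, ey2]; norm_num [dGrid]; ring⟩
    · exact ⟨(0,2), by simp only [fk20, fk21, fk30, fk31, fk32]; rw [Fe10, Fe02, ex, ey, ex1, ey2]; norm_num [dGrid]; ring⟩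
    · rcases le_total y 1 with h | h
      · exact ⟨(0,0), by
          simp only [fk20, fk21, fk30, fk31, fk32]
          rw [Fe11, Fe00, ex, ey, ex1, abs_of_nonpos (by linarith : y - 1 ≤ 0)]
          norm_num [dGrid]; ring⟩
      · exact ⟨(0,2), by
          simp only [fk20, fk21, fk30, fk31, fk32]
          rw [Fe11, Fe02, ex, ex1, ey2, abs_of_nonneg (by linarith : (0:ℝ) ≤ y - 1)]
          norm_num [dGrid]; ring⟩
    · exact ⟨(0,0), by simp only [fk20, fk21, fk30, fk31, fk32]; rw [Fe12, Fe00, ex, ey, ex1, ey2]; norm_num [dGrid]; ring⟩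

lemma phi_F {x y : ℝ} (hx : x ∈ Set.Icc (0:ℝ) 1) (hy : y ∈ Set.Icc (0:ℝ) 2) :
    phi (F x y) = (x, y) := by
  obtain ⟨hx0, hx1⟩ := hx
  obtain ⟨hy0, hy2⟩ := hy
  have ex : |x| = x := abs_of_nonneg hx0
  have ex1 : |x - 1| = -(x - 1) := abs_of_nonpos (by linarith)
  have ey : |y| = y := abs_of_nonneg hy0
  have ey2 : |y - 2| = -(y - 2) := abs_of_nonpos (by linarith)
  simp only [phi, Fe00, Fe10, Fe02, ex, ex1, ey, ey2]
  simp only [Prod.mk.injEq]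
  constructor <;> ring


lemma supDist_F {x y x' y' : ℝ} (hx : x ∈ Set.Icc (0:ℝ) 1) (hy : y ∈ Set.Icc (0:ℝ) 2)
    (hx' : x' ∈ Set.Icc (0:ℝ) 1) (hy' : y' ∈ Set.Icc (0:ℝ) 2) :
    supDist (F x y) (F x' y') = |x - x'| + |y - y'| := by
  obtain ⟨hx0, hx1⟩ := hx
  obtain ⟨hy0, hy2⟩ := hy
  obtain ⟨hx0', hx1'⟩ := hx'
  obtain ⟨hy0', hy2'⟩ := hy'
  have ex : |x| = x := abs_of_nonneg hx0
  have ey : |y| = y := abs_of_nonneg hy0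
  have ey2 : |y - 2| = -(y - 2) := abs_of_nonpos (by linarith)
  have fx : |x'| = x' := abs_of_nonneg hx0'
  have fy : |y'| = y' := abs_of_nonneg hy0'
  have fy2 : |y' - 2| = -(y' - 2) := abs_of_nonpos (by linarith)
  apply le_antisymm
  · apply Finset.sup'_le
    intro p _
    have h1 : abs (|x - (p.1:ℝ)| - |x' - (p.1:ℝ)|) ≤ |x - x'| := by
      have h := abs_abs_sub_abs_le_abs_sub (x - (p.1:ℝ)) (x' - (p.1:ℝ))
      have he : x - (p.1:ℝ) - (x' - (p.1:ℝ)) = x - x' := by ring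
      rwa [he] at h
    have h2 : abs (|y - (p.2:ℝ)| - |y' - (p.2:ℝ)|) ≤ |y - y'| := by
      have h := abs_abs_sub_abs_le_abs_sub (y - (p.2:ℝ)) (y' - (p.2:ℝ))
      have he : y - (p.2:ℝ) - (y' - (p.2:ℝ)) = y - y' := by ring
      rwa [he] at h
    have h4 : F x y p - F x' y' p
        = (|x - (p.1:ℝ)| - |x' - (p.1:ℝ)|) + (|y - (p.2:ℝ)| - |y' - (p.2:ℝ)|) := by
      simp only [F]; ring
    rw [h4]
    calc |(|x - (p.1:ℝ)| - |x' - (p.1:ℝ)|) + (|y - (p.2:ℝ)| - |y' - (p.2:ℝ)|)|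
        ≤ abs (|x - (p.1:ℝ)| - |x' - (p.1:ℝ)|) + abs (|y - (p.2:ℝ)| - |y' - (p.2:ℝ)|) := abs_add_le _ _
      _ ≤ |x - x'| + |y - y'| := by linarith
  · rcases le_total x' x with hxx | hxx <;> rcases le_total y' y with hyy | hyy
    · rw [abs_of_nonneg (by linarith : (0:ℝ) ≤ x - x'), abs_of_nonneg (by linarith : (0:ℝ) ≤ y - y')]
      refine le_trans ?_ (Finset.le_sup' (fun p => |F x y p - F x' y' p|)
        (Finset.mem_univ ((0,0) : Fin 2 × Fin 3)))
      show x - x' + (y - y') ≤ |F x y (0,0) - F x' y' (0,0)|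
      rw [Fe00, Fe00, ex, ey, fx, fy, abs_of_nonneg (by linarith : (0:ℝ) ≤ x + y - (x' + y'))]
      linarith
    · rw [abs_of_nonneg (by linarith : (0:ℝ) ≤ x - x'), abs_of_nonpos (by linarith : y - y' ≤ 0)]
      refine le_trans ?_ (Finset.le_sup' (fun p => |F x y p - F x' y' p|)
        (Finset.mem_univ ((0,2) : Fin 2 × Fin 3)))
      show x - x' + -(y - y') ≤ |F x y (0,2) - F x' y' (0,2)|
      rw [Fe02, Fe02, ex, ey2, fx, fy2,
        abs_of_nonneg (by linarith : (0:ℝ) ≤ x + -(y - 2) - (x' + -(y' - 2)))]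
      linarith
    · rw [abs_of_nonpos (by linarith : x - x' ≤ 0), abs_of_nonneg (by linarith : (0:ℝ) ≤ y - y')]
      refine le_trans ?_ (Finset.le_sup' (fun p => |F x y p - F x' y' p|)
        (Finset.mem_univ ((0,2) : Fin 2 × Fin 3)))
      show -(x - x') + (y - y') ≤ |F x y (0,2) - F x' y' (0,2)|
      rw [Fe02, Fe02, ex, ey2, fx, fy2,
        abs_of_nonpos (by linarith : x + -(y - 2) - (x' + -(y' - 2)) ≤ 0)]
      linarith
    · rw [abs_of_nonpos (by linarith : x - x' ≤ 0), abs_of_nonpos (by linarith : y - y' ≤ 0)]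
      refine le_trans ?_ (Finset.le_sup' (fun p => |F x y p - F x' y' p|)
        (Finset.mem_univ ((0,0) : Fin 2 × Fin 3)))
      show -(x - x') + -(y - y') ≤ |F x y (0,0) - F x' y' (0,0)|
      rw [Fe00, Fe00, ex, ey, fx, fy, abs_of_nonpos (by linarith : x + y - (x' + y') ≤ 0)]
      linarith

end TSGrid


/-- The tight span of the `2 × 3` grid graph (the squaregraph made of two quadrilaterals
sharing an edge) is the `1 × 2` Manhattan rectangle `[0,1] × [0,2]`, with the extremal
function of the vertex `(i,j)` going to the point `(i,j)` of the plane. -/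
theorem tightSpan_grid_two_three :
    ∃ φ : (Fin 2 × Fin 3 → ℝ) → ℝ × ℝ,
      Set.BijOn φ (tightSpan dGrid) (Set.Icc (0 : ℝ) 1 ×ˢ Set.Icc (0 : ℝ) 2) ∧
      (∀ f ∈ tightSpan dGrid, ∀ g ∈ tightSpan dGrid,
        |(φ f).1 - (φ g).1| + |(φ f).2 - (φ g).2| = supDist f g) ∧
      (∀ v : Fin 2 × Fin 3, φ (dGrid v) = ((v.1 : ℝ), (v.2 : ℝ))) := by
  refine ⟨TSGrid.phi, ⟨?_, ?_, ?_⟩, ?_, ?_⟩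
  · intro f hf
    obtain ⟨x, hx, y, hy, rfl⟩ := TSGrid.forward hf
    rw [TSGrid.phi_F hx hy]
    exact Set.mem_prod.mpr ⟨hx, hy⟩
  · intro f hf g hg hfg
    obtain ⟨x, hx, y, hy, rfl⟩ := TSGrid.forward hf
    obtain ⟨x', hx', y', hy', rfl⟩ := TSGrid.forward hg
    rw [TSGrid.phi_F hx hy, TSGrid.phi_F hx' hy'] at hfg
    obtain ⟨h1, h2⟩ := Prod.mk.injEq .. ▸ hfg
    rw [h1, h2]
  · intro z hz
    obtain ⟨hz1, hz2⟩ := hz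
    exact ⟨TSGrid.F z.1 z.2, TSGrid.F_mem hz1 hz2, by rw [TSGrid.phi_F hz1 hz2]⟩
  · intro f hf g hg
    obtain ⟨x, hx, y, hy, rfl⟩ := TSGrid.forward hf
    obtain ⟨x', hx', y', hy', rfl⟩ := TSGrid.forward hg
    rw [TSGrid.phi_F hx hy, TSGrid.phi_F hx' hy']
    exact (TSGrid.supDist_F hx hy hx' hy').symm
  · intro v
    have hv : dGrid v = TSGrid.F ((v.1 : ℝ)) ((v.2 : ℝ)) := rfl
    have h1 : ((v.1 : ℝ)) ∈ Set.Icc (0:ℝ) 1 :=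
      ⟨by positivity, by exact_mod_cast Nat.lt_succ_iff.mp v.1.isLt⟩
    have h2 : ((v.2 : ℝ)) ∈ Set.Icc (0:ℝ) 2 :=
      ⟨by positivity, by exact_mod_cast Nat.lt_succ_iff.mp v.2.isLt⟩
    rw [hv, TSGrid.phi_F h1 h2]
end

section
/- The unit square with the Manhattan metric is hyperconvex: for every index type ι, every family of centers c : ι → [0,1] × [0,1] and radii r : ι → ℝ such that ‖c i − c j‖₁ ≤ r i + r j for all i, j ∈ ι, there exists a point x ∈ [0,1] × [0,1] with ‖x − c i‖₁ ≤ r i for every i. -/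
private lemma clamp_dist (t a : ℝ) (h0 : 0 ≤ a) (h1 : a ≤ 1) :
    |max 0 (min t 1) - a| ≤ |t - a| := by
  rcases le_total t 0 with ht | ht
  · rw [min_eq_left (ht.trans zero_le_one), max_eq_left ht,
      abs_of_nonpos (by linarith), abs_of_nonpos (by linarith)]
    linarith
  · rcases le_total t 1 with ht1 | ht1
    · rw [min_eq_left ht1, max_eq_right ht]
    · rw [min_eq_right ht1, max_eq_right zero_le_one, abs_of_nonneg (by linarith : (0:ℝ) ≤ 1 - a),
        abs_of_nonneg (by linarith)]
      linarith

private lemma max_abs_bound (p q r : ℝ) (hp : |p| ≤ r) (hq : |q| ≤ r) :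
    |p + q| + |p - q| ≤ 2 * r := by
  obtain ⟨hp1, hp2⟩ := abs_le.1 hp
  obtain ⟨hq1, hq2⟩ := abs_le.1 hq
  rcases abs_cases (p + q) with ⟨e1, _⟩ | ⟨e1, _⟩ <;>
    rcases abs_cases (p - q) with ⟨e2, _⟩ | ⟨e2, _⟩ <;> rw [e1, e2] <;> linarith

/-- The unit square with the Manhattan metric is hyperconvex: any family of closed balls
with centers in `[0,1] × [0,1]` and radii pairwise compatible with the `L¹` distances
between the centers has a common point in the square. -/
theorem unit_square_manhattan_hyperconvex {ι : Type*} (c : ι → ℝ × ℝ) (r : ι → ℝ)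
    (hc : ∀ i, c i ∈ Set.Icc (0 : ℝ) 1 ×ˢ Set.Icc (0 : ℝ) 1)
    (h : ∀ i j, |(c i).1 - (c j).1| + |(c i).2 - (c j).2| ≤ r i + r j) :
    ∃ x ∈ Set.Icc (0 : ℝ) 1 ×ˢ Set.Icc (0 : ℝ) 1,
      ∀ i, |x.1 - (c i).1| + |x.2 - (c i).2| ≤ r i := by
  obtain hι | hne := isEmpty_or_nonempty ι
  · exact ⟨(0, 0), ⟨⟨le_rfl, zero_le_one⟩, ⟨le_rfl, zero_le_one⟩⟩, fun i => hι.elim i⟩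
  obtain ⟨i₀⟩ := hne
  haveI : Nonempty ι := ⟨i₀⟩
  set a : ι → ℝ := fun i => (c i).1 with ha
  set b : ι → ℝ := fun i => (c i).2 with hb
  have hu : ∀ i j, |(a i + b i) - (a j + b j)| ≤ r i + r j := by
    intro i j
    calc |(a i + b i) - (a j + b j)| = |(a i - a j) + (b i - b j)| := by ring_nf
      _ ≤ |a i - a j| + |b i - b j| := abs_add_le _ _
      _ ≤ r i + r j := h i j
  have hv : ∀ i j, |(a i - b i) - (a j - b j)| ≤ r i + r j := by
    intro i j
    calc |(a i - b i) - (a j - b j)| = |(a i - a j) - (b i - b j)| := by ring_nf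
      _ ≤ |a i - a j| + |b i - b j| := abs_sub _ _
      _ ≤ r i + r j := h i j
  have hbU : BddAbove (Set.range fun i => a i + b i - r i) := by
    refine ⟨a i₀ + b i₀ + r i₀, ?_⟩
    rintro x ⟨i, rfl⟩
    have := (abs_le.1 (hu i i₀)).2
    dsimp only
    linarith
  have hbV : BddAbove (Set.range fun i => a i - b i - r i) := by
    refine ⟨a i₀ - b i₀ + r i₀, ?_⟩
    rintro x ⟨i, rfl⟩
    have := (abs_le.1 (hv i i₀)).2
    dsimp only
    linarith
  set U := ⨆ i, (a i + b i - r i) with hUdef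
  set V := ⨆ i, (a i - b i - r i) with hVdef
  have hU1 : ∀ i, a i + b i - r i ≤ U := fun i => le_ciSup hbU i
  have hU2 : ∀ j, U ≤ a j + b j + r j := fun j =>
    ciSup_le fun i => by have := (abs_le.1 (hu i j)).2; linarith
  have hV1 : ∀ i, a i - b i - r i ≤ V := fun i => le_ciSup hbV i
  have hV2 : ∀ j, V ≤ a j - b j + r j := fun j =>
    ciSup_le fun i => by have := (abs_le.1 (hv i j)).2; linarith
  set y1 : ℝ := (U + V) / 2
  set y2 : ℝ := (U - V) / 2
  have key : ∀ i, |y1 - a i| + |y2 - b i| ≤ r i := by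
    intro i
    have hp : |U - (a i + b i)| ≤ r i :=
      abs_le.2 ⟨by have := hU1 i; linarith, by have := hU2 i; linarith⟩
    have hq : |V - (a i - b i)| ≤ r i :=
      abs_le.2 ⟨by have := hV1 i; linarith, by have := hV2 i; linarith⟩
    have hpq := max_abs_bound _ _ _ hp hq
    have e1 : y1 - a i = ((U - (a i + b i)) + (V - (a i - b i))) / 2 := by
      simp only [y1]; ring
    have e2 : y2 - b i = ((U - (a i + b i)) - (V - (a i - b i))) / 2 := by
      simp only [y2]; ring
    rw [e1, e2, abs_div, abs_div, abs_of_nonneg (by norm_num : (0:ℝ) ≤ 2)]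
    linarith
  refine ⟨(max 0 (min y1 1), max 0 (min y2 1)),
    ⟨⟨le_max_left _ _, max_le zero_le_one (min_le_right _ _)⟩,
     ⟨le_max_left _ _, max_le zero_le_one (min_le_right _ _)⟩⟩, fun i => ?_⟩
  obtain ⟨⟨ha0, ha1⟩, hb0, hb1⟩ := hc i
  have d1 := clamp_dist y1 (a i) ha0 ha1
  have d2 := clamp_dist y2 (b i) hb0 hb1
  have := key i
  dsimp only
  linarith
end
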